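/- arXiv:1707.02918 — 5 statements merged into one kernel-verified Lean document; each statement's English description precedes it below -/
import Mathlib

section
/- For every positive integer k, every finite simple graph G and every vertex set A ⊆ V(G), the graph G either contains k pairwise vertex-disjoint A-paths, or there is a vertex set X ⊆ V(G) with |X| ≤ 4k that meets every A-path of G. -/
open SimpleGraph

/-- An `A`-path in `G`: a path of length at least 1 whose two endvertices lie in `A`
and none of whose internal vertices lies in `A`. -/
def IsAPath {V : Type*} (G : SimpleGraph V) (A : Set V) {u v : V} (p : G.Walk u v) : Prop :=
  p.IsPath ∧ 1 ≤ p.length ∧ u ∈ A ∧ v ∈ A ∧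
    ∀ x ∈ p.support, x ∈ A → x = u ∨ x = v


section GallaiAux
variable {V : Type*} {G : SimpleGraph V}

lemma walk_one_le_length_of_ne {u v : V} (p : G.Walk u v) (h : u ≠ v) : 1 ≤ p.length := by
  cases p with
  | nil => exact absurd rfl h
  | cons h q => simp [Walk.length_cons]

lemma walk_ends_ne_of_isPath {u v : V} {p : G.Walk u v} (hp : p.IsPath) (hl : 1 ≤ p.length) :
    u ≠ v := by
  cases p with
  | nil => simp at hl
  | cons h q =>
    intro huv
    have hnd := hp.support_nodup
    rw [Walk.support_cons] at hnd
    have : u ∉ q.support := (List.nodup_cons.mp hnd).1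
    exact this (huv ▸ q.end_mem_support)

lemma isPath_append_of_inter {u v w : V} {p : G.Walk u v} {q : G.Walk v w}
    (hp : p.IsPath) (hq : q.IsPath) (h : ∀ x, x ∈ p.support → x ∈ q.support → x = v) :
    (p.append q).IsPath := by
  rw [Walk.isPath_def, Walk.support_append, List.nodup_append]
  refine ⟨hp.support_nodup, ?_, ?_⟩
  · have := hq.support_nodup
    rw [q.support_eq_cons] at this
    exact (List.nodup_cons.mp this).2
  · intro x hxp _ hxq rfl
    have hxq' : x ∈ q.support := by
      rw [q.support_eq_cons]; exact List.mem_cons_of_mem _ hxq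
    have hx := h x hxp hxq'
    subst hx
    have := hq.support_nodup
    rw [q.support_eq_cons] at this
    exact (List.nodup_cons.mp this).1 hxq

lemma take_drop_inter [DecidableEq V] {u w z : V} {W : G.Walk u w} (hW : W.IsPath)
    (h : z ∈ W.support) :
    ∀ x, x ∈ (W.takeUntil z h).support → x ∈ (W.dropUntil z h).support → x = z := by
  intro x hx1 hx2
  have hspec := W.take_spec h
  have hnd := hW.support_nodup
  rw [← hspec, Walk.support_append, List.nodup_append] at hnd
  rw [(W.dropUntil z h).support_eq_cons, List.mem_cons] at hx2
  rcases hx2 with h2 | h2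
  · exact h2
  · exact absurd rfl (hnd.2.2 x hx1 x h2)

lemma exists_firstHit {S : Set V} :
    ∀ {c e : V} (Q : G.Walk c e), Q.IsPath → c ∉ S → (∃ x ∈ Q.support, x ∈ S) →
    ∃ (y : V) (σ : G.Walk c y), y ∈ S ∧ σ.IsPath ∧ (∀ x ∈ σ.support, x ∈ Q.support) ∧
      (∀ x ∈ σ.support, x ∈ S → x = y) ∧ (e ∈ σ.support → e ∈ S) := by
  intro c e Q
  induction Q with
  | nil =>
    intro _ hc hex
    obtain ⟨x, hx, hxS⟩ := hex
    rw [Walk.support_nil, List.mem_singleton] at hx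
    exact absurd (hx ▸ hxS) hc
  | @cons c m e hadj q ih =>
    intro hp hc hex
    have hq : q.IsPath := hp.of_cons
    have hcq : c ∉ q.support := by
      have := hp.support_nodup
      rw [Walk.support_cons] at this
      exact (List.nodup_cons.mp this).1
    have hce : c ≠ e := fun h => hcq (h ▸ q.end_mem_support)
    by_cases hm : m ∈ S
    · refine ⟨m, Walk.cons hadj Walk.nil, hm, ?_, ?_, ?_, ?_⟩
      · rw [Walk.cons_isPath_iff]
        refine ⟨Walk.IsPath.nil, ?_⟩
        rw [Walk.support_nil, List.mem_singleton]
        intro h; exact hc (h ▸ hm)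
      · intro x hx
        rw [Walk.support_cons, Walk.support_nil, List.mem_cons, List.mem_singleton] at hx
        rcases hx with rfl | rfl
        · exact Walk.start_mem_support _
        · rw [Walk.support_cons]
          exact List.mem_cons_of_mem _ (Walk.start_mem_support q)
      · intro x hx hxS
        rw [Walk.support_cons, Walk.support_nil, List.mem_cons, List.mem_singleton] at hx
        rcases hx with rfl | rfl
        · exact absurd hxS hc
        · rfl
      · intro he
        rw [Walk.support_cons, Walk.support_nil, List.mem_cons, List.mem_singleton] at he
        rcases he with he | he
        · exact absurd he.symm hce
        · exact he ▸ hm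
    · have hex' : ∃ x ∈ q.support, x ∈ S := by
        obtain ⟨x, hx, hxS⟩ := hex
        rw [Walk.support_cons, List.mem_cons] at hx
        rcases hx with rfl | hx
        · exact absurd hxS hc
        · exact ⟨x, hx, hxS⟩
      obtain ⟨y, σ', hyS, hσp, hσsub, hσS, hσe⟩ := ih hq hm hex'
      refine ⟨y, Walk.cons hadj σ', hyS, ?_, ?_, ?_, ?_⟩
      · rw [Walk.cons_isPath_iff]
        exact ⟨hσp, fun h => hcq (hσsub c h)⟩
      · intro x hx
        rw [Walk.support_cons, List.mem_cons] at hx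
        rw [Walk.support_cons, List.mem_cons]
        rcases hx with rfl | hx
        · exact Or.inl rfl
        · exact Or.inr (hσsub x hx)
      · intro x hx hxS
        rw [Walk.support_cons, List.mem_cons] at hx
        rcases hx with rfl | hx
        · exact absurd hxS hc
        · exact hσS x hx hxS
      · intro he
        rw [Walk.support_cons, List.mem_cons] at he
        rcases he with he | he
        · exact absurd he.symm hce
        · exact hσe he

lemma take_drop_inter' [DecidableEq V] {u w z : V} {W : G.Walk u w} (hW : W.IsPath)
    (h : z ∈ W.support) :
    ∀ x, x ∈ (W.takeUntil z h).support → x ∈ (W.dropUntil z h).support → x = z := by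
  intro x hx1 hx2
  have hspec := W.take_spec h
  have hnd := hW.support_nodup
  rw [← hspec, Walk.support_append, List.nodup_append] at hnd
  rw [(W.dropUntil z h).support_eq_cons, List.mem_cons] at hx2
  rcases hx2 with h2 | h2
  · exact h2
  · exact absurd rfl (hnd.2.2 x hx1 x h2)

lemma split_two [DecidableEq V] {a b : V} {P : G.Walk a b} (hP : P.IsPath)
    {y1 y2 : V} (h1 : y1 ∈ P.support) (h2 : y2 ∈ P.support) (hne : y1 ≠ y2)
    (hy1b : y1 ≠ b) (hy2a : y2 ≠ a) :
    ∃ (e1 e2 : V) (W1 : G.Walk y1 e1) (W2 : G.Walk y2 e2),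
      ((e1 = a ∧ e2 = b) ∨ (e1 = b ∧ e2 = a)) ∧ W1.IsPath ∧ W2.IsPath ∧
      (∀ x ∈ W1.support, x ∈ P.support) ∧ (∀ x ∈ W2.support, x ∈ P.support) ∧
      (∀ x, x ∈ W1.support → x ∈ W2.support → False) := by
  set T := P.takeUntil y1 h1 with hTdef
  set D := P.dropUntil y1 h1 with hDdef
  have hTp : T.IsPath := hP.takeUntil h1
  have hDp : D.IsPath := hP.dropUntil h1
  have hTD : ∀ x, x ∈ T.support → x ∈ D.support → x = y1 := take_drop_inter' hP h1
  by_cases hD : y2 ∈ D.support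
  · refine ⟨a, b, T.reverse, D.dropUntil y2 hD, Or.inl ⟨rfl, rfl⟩, hTp.reverse,
      hDp.dropUntil hD, ?_, ?_, ?_⟩
    · intro x hx
      rw [Walk.support_reverse, List.mem_reverse] at hx
      exact P.support_takeUntil_subset h1 hx
    · intro x hx
      exact P.support_dropUntil_subset h1 (D.support_dropUntil_subset hD hx)
    · intro x hx1 hx2
      rw [Walk.support_reverse, List.mem_reverse] at hx1
      have hxD : x ∈ D.support := D.support_dropUntil_subset hD hx2
      have hxy1 : x = y1 := hTD x hx1 hxD
      subst hxy1
      have : x = y2 := take_drop_inter' hDp hD x (Walk.start_mem_support _) hx2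
      exact hne this
  · have hT : y2 ∈ T.support := by
      have h2' := h2
      rw [← P.take_spec h1, Walk.mem_support_append_iff] at h2'
      rcases h2' with h' | h'
      · exact h'
      · exact absurd h' hD
    refine ⟨b, a, D, (T.takeUntil y2 hT).reverse, Or.inr ⟨rfl, rfl⟩, hDp,
      (hTp.takeUntil hT).reverse, ?_, ?_, ?_⟩
    · intro x hx
      exact P.support_dropUntil_subset h1 hx
    · intro x hx
      rw [Walk.support_reverse, List.mem_reverse] at hx
      exact P.support_takeUntil_subset h1 (T.support_takeUntil_subset hT hx)
    · intro x hx1 hx2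
      rw [Walk.support_reverse, List.mem_reverse] at hx2
      have hxT : x ∈ T.support := T.support_takeUntil_subset hT hx2
      have hxy1 : x = y1 := hTD x hxT hx1
      subst hxy1
      have : x = y2 := take_drop_inter' hTp hT x hx2 (Walk.end_mem_support _)
      exact hne this
variable {V : Type*} {G : SimpleGraph V} {A : Set V}

/-- A family of `t` pairwise disjoint A-paths. -/
def APathFam (G : SimpleGraph V) (A : Set V) (t : ℕ)
    (f : Fin t → Σ u : V, Σ v : V, G.Walk u v) : Prop :=
  (∀ i, IsAPath G A (f i).2.2) ∧
  (∀ i j, i ≠ j → ∀ x, x ∈ (f i).2.2.support → x ∉ (f j).2.2.support)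

/-- The union of the supports of a family. -/
def famSup {t : ℕ} (f : Fin t → Σ u : V, Σ v : V, G.Walk u v) : Set V :=
  {x | ∃ i, x ∈ (f i).2.2.support}

/-- A witness that `y` is an attachment point on member `i`, reached from `c ∈ A` by a
path `σ` meeting the family only in `y`. -/
def AWit (G : SimpleGraph V) (A : Set V) {t : ℕ}
    (f : Fin t → Σ u : V, Σ v : V, G.Walk u v) (i : Fin t) (y c : V) (σ : G.Walk c y) : Prop :=
  y ∈ (f i).2.2.support ∧ y ≠ (f i).1 ∧ y ≠ (f i).2.1 ∧ σ.IsPath ∧ c ∈ A ∧ c ∉ famSup f ∧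
  (∀ x ∈ σ.support, x ∈ famSup f → x = y) ∧ (∀ x ∈ σ.support, x ∈ A → x = c)
lemma key [DecidableEq V] {t : ℕ} {f : Fin t → Σ u : V, Σ v : V, G.Walk u v}
    (hf : APathFam G A t f)
    (hmax : ¬ ∃ g : Fin (t+1) → Σ u : V, Σ v : V, G.Walk u v, APathFam G A (t+1) g)
    {i : Fin t} {y1 y2 c1 c2 : V} {σ1 : G.Walk c1 y1} {σ2 : G.Walk c2 y2}
    (w1 : AWit G A f i y1 c1 σ1) (w2 : AWit G A f i y2 c2 σ2) (hy : y1 ≠ y2) :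
    c1 = c2 := by
  by_contra hcc
  obtain ⟨hy1mem, hy1u, hy1v, hσ1p, hc1A, hc1S, hσ1S, hσ1A⟩ := w1
  obtain ⟨hy2mem, hy2u, hy2v, hσ2p, hc2A, hc2S, hσ2S, hσ2A⟩ := w2
  have hy1F : y1 ∈ famSup f := ⟨i, hy1mem⟩
  have hy2F : y2 ∈ famSup f := ⟨i, hy2mem⟩
  by_cases hint : ∃ z, z ∈ σ1.support ∧ z ∈ σ2.support
  · -- the two approach paths overlap: build an A-path avoiding the whole family
    have hc2nS : c2 ∉ {x : V | x ∈ σ1.support} := by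
      intro h
      exact hcc ((hσ1A c2 h hc2A).symm)
    obtain ⟨z0, hz1, hz2⟩ := hint
    obtain ⟨z, τ, hzS, hτp, hτsub, hτS, hy2τ⟩ :=
      exists_firstHit (S := {x : V | x ∈ σ1.support}) σ2 hσ2p hc2nS ⟨z0, hz2, hz1⟩
    have hzσ1 : z ∈ σ1.support := hzS
    have hy2σ1 : y2 ∉ σ1.support := fun h => hy (hσ1S y2 h hy2F).symm
    have hy2nτ : y2 ∉ τ.support := fun h => hy2σ1 (hy2τ h)
    have hzy1 : z ≠ y1 := by
      intro h
      have hz2' : z ∈ σ2.support := hτsub z (Walk.end_mem_support τ)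
      exact hy (hσ2S y1 (h ▸ hz2') hy1F)
    have htkp : (σ1.takeUntil z hzσ1).IsPath := hσ1p.takeUntil hzσ1
    have htksub : ∀ x ∈ (σ1.takeUntil z hzσ1).support, x ∈ σ1.support :=
      fun x hx => σ1.support_takeUntil_subset hzσ1 hx
    have hy1tk : y1 ∉ (σ1.takeUntil z hzσ1).support := by
      intro h
      exact hzy1 (take_drop_inter hσ1p hzσ1 y1 h (Walk.end_mem_support _)).symm
    have hNp : (τ.append (σ1.takeUntil z hzσ1).reverse).IsPath := by
      apply isPath_append_of_inter hτp htkp.reverse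
      intro x hx1 hx2
      rw [Walk.support_reverse, List.mem_reverse] at hx2
      exact hτS x hx1 (htksub x hx2)
    have hNmem : ∀ x, x ∈ (τ.append (σ1.takeUntil z hzσ1).reverse).support →
        x ∈ τ.support ∨ x ∈ (σ1.takeUntil z hzσ1).support := by
      intro x hx
      rw [Walk.mem_support_append_iff] at hx
      rcases hx with hx | hx
      · exact Or.inl hx
      · rw [Walk.support_reverse, List.mem_reverse] at hx; exact Or.inr hx
    have hNF : ∀ x, x ∈ (τ.append (σ1.takeUntil z hzσ1).reverse).support → x ∉ famSup f := by
      intro x hx hxF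
      rcases hNmem x hx with hx | hx
      · have hxy : x = y2 := hσ2S x (hτsub x hx) hxF
        exact hy2nτ (hxy ▸ hx)
      · have hxy : x = y1 := hσ1S x (htksub x hx) hxF
        exact hy1tk (hxy ▸ hx)
    have hNA : IsAPath G A (τ.append (σ1.takeUntil z hzσ1).reverse) := by
      refine ⟨hNp, walk_one_le_length_of_ne _ (fun h => hcc h.symm), hc2A, hc1A, ?_⟩
      intro x hx hxA
      rcases hNmem x hx with hx | hx
      · exact Or.inl (hσ2A x (hτsub x hx) hxA)
      · exact Or.inr (hσ1A x (htksub x hx) hxA)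
    apply hmax
    refine ⟨Fin.snoc f ⟨c2, c1, τ.append (σ1.takeUntil z hzσ1).reverse⟩, ?_, ?_⟩
    · intro j
      rcases Fin.eq_castSucc_or_eq_last j with ⟨i1, rfl⟩ | rfl
      · rw [Fin.snoc_castSucc]; exact hf.1 i1
      · rw [Fin.snoc_last]; exact hNA
    · intro j1 j2 hne x hx1 hx2
      rcases Fin.eq_castSucc_or_eq_last j1 with ⟨i1, rfl⟩ | rfl <;>
        rcases Fin.eq_castSucc_or_eq_last j2 with ⟨i2, rfl⟩ | rfl
      · rw [Fin.snoc_castSucc] at hx1 hx2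
        exact hf.2 i1 i2 (fun h => hne (by rw [h])) x hx1 hx2
      · rw [Fin.snoc_castSucc] at hx1
        rw [Fin.snoc_last] at hx2
        exact hNF x hx2 ⟨i1, hx1⟩
      · rw [Fin.snoc_last] at hx1
        rw [Fin.snoc_castSucc] at hx2
        exact hNF x hx1 ⟨i2, hx2⟩
      · exact hne rfl
  · -- the two approach paths are disjoint: reroute the family member
    push_neg at hint
    obtain ⟨hPp, hPl, haA, hbA, hPint⟩ := hf.1 i
    obtain ⟨e1, e2, W1, W2, hee, hW1p, hW2p, hW1sub, hW2sub, hW12⟩ :=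
      split_two hPp hy1mem hy2mem hy hy1v hy2u
    have he1A : e1 ∈ A := by
      rcases hee with ⟨h1, _⟩ | ⟨h1, _⟩ <;> rw [h1]
      · exact haA
      · exact hbA
    have he2A : e2 ∈ A := by
      rcases hee with ⟨_, h2⟩ | ⟨_, h2⟩ <;> rw [h2]
      · exact hbA
      · exact haA
    have hW1int : ∀ x ∈ W1.support, x ∈ A → x = e1 := by
      intro x hx hxA
      have h0 := hPint x (hW1sub x hx) hxA
      have h12 : x = e1 ∨ x = e2 := by
        rcases hee with ⟨h1, h2⟩ | ⟨h1, h2⟩ <;> subst h1 <;> subst h2 <;> tauto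
      rcases h12 with h | h
      · exact h
      · exact absurd (by rw [h]; exact Walk.end_mem_support W2) (fun hh => hW12 x hx hh)
    have hW2int : ∀ x ∈ W2.support, x ∈ A → x = e2 := by
      intro x hx hxA
      have h0 := hPint x (hW2sub x hx) hxA
      have h12 : x = e1 ∨ x = e2 := by
        rcases hee with ⟨h1, h2⟩ | ⟨h1, h2⟩ <;> subst h1 <;> subst h2 <;> tauto
      rcases h12 with h | h
      · exact absurd (by rw [h]; exact Walk.end_mem_support W1) (fun hh => hW12 x hh hx)
      · exact h
    have hc1e1 : c1 ≠ e1 := by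
      intro h
      exact hc1S ⟨i, h ▸ (hW1sub e1 (Walk.end_mem_support W1))⟩
    have hc2e2 : c2 ≠ e2 := by
      intro h
      exact hc2S ⟨i, h ▸ (hW2sub e2 (Walk.end_mem_support W2))⟩
    have hR1mem : ∀ x, x ∈ (σ1.append W1).support → x ∈ σ1.support ∨ x ∈ W1.support := by
      intro x hx; rwa [Walk.mem_support_append_iff] at hx
    have hR2mem : ∀ x, x ∈ (σ2.append W2).support → x ∈ σ2.support ∨ x ∈ W2.support := by
      intro x hx; rwa [Walk.mem_support_append_iff] at hx
    have hR1p : (σ1.append W1).IsPath :=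
      isPath_append_of_inter hσ1p hW1p (fun x hx1 hx2 => hσ1S x hx1 ⟨i, hW1sub x hx2⟩)
    have hR2p : (σ2.append W2).IsPath :=
      isPath_append_of_inter hσ2p hW2p (fun x hx1 hx2 => hσ2S x hx1 ⟨i, hW2sub x hx2⟩)
    have hR1A : IsAPath G A (σ1.append W1) := by
      refine ⟨hR1p, walk_one_le_length_of_ne _ hc1e1, hc1A, he1A, ?_⟩
      intro x hx hxA
      rcases hR1mem x hx with hx | hx
      · exact Or.inl (hσ1A x hx hxA)
      · exact Or.inr (hW1int x hx hxA)
    have hR2A : IsAPath G A (σ2.append W2) := by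
      refine ⟨hR2p, walk_one_le_length_of_ne _ hc2e2, hc2A, he2A, ?_⟩
      intro x hx hxA
      rcases hR2mem x hx with hx | hx
      · exact Or.inl (hσ2A x hx hxA)
      · exact Or.inr (hW2int x hx hxA)
    have hRR : ∀ x, x ∈ (σ1.append W1).support → x ∈ (σ2.append W2).support → False := by
      intro x hx1 hx2
      rcases hR1mem x hx1 with h1 | h1 <;> rcases hR2mem x hx2 with h2 | h2
      · exact hint x h1 h2
      · have hxy : x = y1 := hσ1S x h1 ⟨i, hW2sub x h2⟩
        exact hW12 x (by rw [hxy]; exact Walk.start_mem_support W1) h2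
      · have hxy : x = y2 := hσ2S x h2 ⟨i, hW1sub x h1⟩
        exact hW12 x h1 (by rw [hxy]; exact Walk.start_mem_support W2)
      · exact hW12 x h1 h2
    have hR1old : ∀ j, j ≠ i → ∀ x, x ∈ (σ1.append W1).support →
        x ∈ (f j).2.2.support → False := by
      intro j hj x hx1 hx2
      rcases hR1mem x hx1 with h1 | h1
      · have hxy : x = y1 := hσ1S x h1 ⟨j, hx2⟩
        exact hf.2 i j (fun h => hj h.symm) y1 hy1mem (by rw [← hxy]; exact hx2)
      · exact hf.2 i j (fun h => hj h.symm) x (hW1sub x h1) hx2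
    have hR2old : ∀ j, j ≠ i → ∀ x, x ∈ (σ2.append W2).support →
        x ∈ (f j).2.2.support → False := by
      intro j hj x hx1 hx2
      rcases hR2mem x hx1 with h1 | h1
      · have hxy : x = y2 := hσ2S x h1 ⟨j, hx2⟩
        exact hf.2 i j (fun h => hj h.symm) y2 hy2mem (by rw [← hxy]; exact hx2)
      · exact hf.2 i j (fun h => hj h.symm) x (hW2sub x h1) hx2
    apply hmax
    refine ⟨Fin.snoc (Function.update f i ⟨c1, e1, σ1.append W1⟩) ⟨c2, e2, σ2.append W2⟩,
      ?_, ?_⟩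
    · intro j
      rcases Fin.eq_castSucc_or_eq_last j with ⟨i1, rfl⟩ | rfl
      · rw [Fin.snoc_castSucc]
        by_cases h : i1 = i
        · subst h; rw [Function.update_self]; exact hR1A
        · rw [Function.update_of_ne h]; exact hf.1 i1
      · rw [Fin.snoc_last]; exact hR2A
    · intro j1 j2 hne x hx1 hx2
      rcases Fin.eq_castSucc_or_eq_last j1 with ⟨i1, rfl⟩ | rfl <;>
        rcases Fin.eq_castSucc_or_eq_last j2 with ⟨i2, rfl⟩ | rfl
      · rw [Fin.snoc_castSucc] at hx1 hx2
        have hne' : i1 ≠ i2 := fun h => hne (by rw [h])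
        by_cases h1 : i1 = i
        · subst h1
          rw [Function.update_self] at hx1
          rw [Function.update_of_ne (fun h => hne' h.symm)] at hx2
          exact hR1old i2 (fun h => hne' h.symm) x hx1 hx2
        · rw [Function.update_of_ne h1] at hx1
          by_cases h2 : i2 = i
          · subst h2
            rw [Function.update_self] at hx2
            exact hR1old i1 h1 x hx2 hx1
          · rw [Function.update_of_ne h2] at hx2
            exact hf.2 i1 i2 hne' x hx1 hx2
      · rw [Fin.snoc_castSucc] at hx1
        rw [Fin.snoc_last] at hx2
        by_cases h1 : i1 = i
        · subst h1
          rw [Function.update_self] at hx1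
          exact hRR x hx1 hx2
        · rw [Function.update_of_ne h1] at hx1
          exact hR2old i1 h1 x hx2 hx1
      · rw [Fin.snoc_last] at hx1
        rw [Fin.snoc_castSucc] at hx2
        by_cases h2 : i2 = i
        · subst h2
          rw [Function.update_self] at hx2
          exact hRR x hx2 hx1
        · rw [Function.update_of_ne h2] at hx2
          exact hR2old i2 h2 x hx1 hx2
      · exact hne rfl

/-- Attachment-point predicate. -/
def WitPt (G : SimpleGraph V) (A : Set V) {t : ℕ}
    (f : Fin t → Σ u : V, Σ v : V, G.Walk u v) (i : Fin t) (y : V) : Prop :=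
  ∃ c, ∃ σ : G.Walk c y, AWit G A f i y c σ

/-- Common-origin predicate: `c` is the origin of a witness, and there is a witness with a
different attachment point. -/
def WitC (G : SimpleGraph V) (A : Set V) {t : ℕ}
    (f : Fin t → Σ u : V, Σ v : V, G.Walk u v) (i : Fin t) (c : V) : Prop :=
  ∃ y, (∃ σ : G.Walk c y, AWit G A f i y c σ) ∧
    ∃ y' c', y' ≠ y ∧ ∃ σ' : G.Walk c' y', AWit G A f i y' c' σ'

lemma hitting [DecidableEq V] {t : ℕ} {f : Fin t → Σ u : V, Σ v : V, G.Walk u v}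
    (hf : APathFam G A t f)
    (hmax : ¬ ∃ g : Fin (t+1) → Σ u : V, Σ v : V, G.Walk u v, APathFam G A (t+1) g) :
    ∃ X : Finset V, X.card ≤ 4 * t ∧
      ∀ (u v : V) (p : G.Walk u v), IsAPath G A p → ∃ x ∈ X, x ∈ p.support := by
  classical
  set pt : Fin t → Finset V :=
    fun i => if h : ∃ y, WitPt G A f i y then {h.choose} else ∅ with hpt
  set ct : Fin t → Finset V :=
    fun i => if h : ∃ c, WitC G A f i c then {h.choose} else ∅ with hct
  set Xi : Fin t → Finset V := fun i => {(f i).1, (f i).2.1} ∪ pt i ∪ ct i with hXi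
  refine ⟨Finset.univ.biUnion Xi, ?_, ?_⟩
  · calc (Finset.univ.biUnion Xi).card ≤ ∑ i, (Xi i).card := Finset.card_biUnion_le
      _ ≤ ∑ _i : Fin t, 4 := by
          apply Finset.sum_le_sum
          intro i _
          have h1 : (Xi i).card ≤ ({(f i).1, (f i).2.1} : Finset V).card + (pt i).card
              + (ct i).card := by
            refine le_trans (Finset.card_union_le _ _) ?_
            exact Nat.add_le_add_right (Finset.card_union_le _ _) _
          have h2 : ({(f i).1, (f i).2.1} : Finset V).card ≤ 2 :=
            le_trans (Finset.card_insert_le _ _) (by simp)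
          have h3 : (pt i).card ≤ 1 := by
            by_cases h : ∃ y, WitPt G A f i y
            · simp only [hpt, dif_pos h]
              simp
            · simp only [hpt, dif_neg h]
              simp
          have h4 : (ct i).card ≤ 1 := by
            by_cases h : ∃ c, WitC G A f i c
            · simp only [hct, dif_pos h]
              simp
            · simp only [hct, dif_neg h]
              simp
          omega
      _ ≤ 4 * t := by simp [Finset.sum_const, Finset.card_univ, Nat.mul_comm]
  · intro u v p hp
    by_contra hmiss
    push_neg at hmiss
    have hXsub : ∀ i x, x ∈ Xi i → x ∉ p.support :=
      fun i x hx => hmiss x (Finset.mem_biUnion.mpr ⟨i, Finset.mem_univ i, hx⟩)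
    have hu_mem : ∀ i, (f i).1 ∈ Xi i := by
      intro i
      rw [hXi]
      refine Finset.mem_union_left _ (Finset.mem_union_left _ ?_)
      simp
    have hv_mem : ∀ i, (f i).2.1 ∈ Xi i := by
      intro i
      rw [hXi]
      refine Finset.mem_union_left _ (Finset.mem_union_left _ ?_)
      simp
    obtain ⟨hpp, hpl, huA, hvA, hpint⟩ := hp
    have huv : u ≠ v := walk_ends_ne_of_isPath hpp hpl
    have huS : u ∉ famSup f := by
      rintro ⟨i, hi⟩
      rcases (hf.1 i).2.2.2.2 u hi huA with h | h
      · exact hXsub i u (h ▸ hu_mem i) (Walk.start_mem_support p)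
      · exact hXsub i u (h ▸ hv_mem i) (Walk.start_mem_support p)
    have hvS : v ∉ famSup f := by
      rintro ⟨i, hi⟩
      rcases (hf.1 i).2.2.2.2 v hi hvA with h | h
      · exact hXsub i v (h ▸ hu_mem i) (Walk.end_mem_support p)
      · exact hXsub i v (h ▸ hv_mem i) (Walk.end_mem_support p)
    by_cases hpS : ∃ x ∈ p.support, x ∈ famSup f
    · obtain ⟨y, σ, hyF, hσp, hσsub, hσS, hσe⟩ :=
        exists_firstHit (S := famSup f) p hpp huS hpS
      have hvσ : v ∉ σ.support := fun h => hvS (hσe h)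
      obtain ⟨i, hyi⟩ := hyF
      have hyp : y ∈ p.support := hσsub y (Walk.end_mem_support σ)
      have hyu : y ≠ (f i).1 := fun h => hXsub i y (h ▸ hu_mem i) hyp
      have hyv : y ≠ (f i).2.1 := fun h => hXsub i y (h ▸ hv_mem i) hyp
      have wit : AWit G A f i y u σ := by
        refine ⟨hyi, hyu, hyv, hσp, huA, huS, hσS, ?_⟩
        intro x hx hxA
        rcases hpint x (hσsub x hx) hxA with h | h
        · exact h
        · exact absurd (h ▸ hx) hvσ
      have hPtEx : ∃ y', WitPt G A f i y' := ⟨y, u, σ, wit⟩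
      obtain ⟨c0, σ0, wit0⟩ := hPtEx.choose_spec
      have hy0Xi : hPtEx.choose ∈ Xi i := by
        rw [hXi]
        refine Finset.mem_union_left _ (Finset.mem_union_right _ ?_)
        simp only [hpt, dif_pos hPtEx]
        exact Finset.mem_singleton_self _
      have hy0p : hPtEx.choose ∉ p.support := hXsub i _ hy0Xi
      have hyne : y ≠ hPtEx.choose := fun h => hy0p (h ▸ hyp)
      have hCEx : ∃ c, WitC G A f i c :=
        ⟨c0, hPtEx.choose, ⟨σ0, wit0⟩, y, u, hyne, σ, wit⟩
      obtain ⟨yc, ⟨σc, witc⟩, y', c', hy'ne, σ', wit'⟩ := hCEx.choose_spec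
      have hcXi : hCEx.choose ∈ Xi i := by
        rw [hXi]
        refine Finset.mem_union_right _ ?_
        simp only [hct, dif_pos hCEx]
        exact Finset.mem_singleton_self _
      have huc : u = hCEx.choose := by
        by_cases hyyc : y = yc
        · have h1 : u = c' := key hf hmax wit wit' (by rw [hyyc]; exact (Ne.symm hy'ne))
          have h2 : hCEx.choose = c' := key hf hmax witc wit' (Ne.symm hy'ne)
          rw [h1, h2]
        · exact key hf hmax wit witc hyyc
      exact hXsub i u (huc ▸ hcXi) (Walk.start_mem_support p)
    · push_neg at hpS
      apply hmax
      refine ⟨Fin.snoc f ⟨u, v, p⟩, ?_, ?_⟩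
      · intro j
        rcases Fin.eq_castSucc_or_eq_last j with ⟨i1, rfl⟩ | rfl
        · rw [Fin.snoc_castSucc]; exact hf.1 i1
        · rw [Fin.snoc_last]; exact ⟨hpp, hpl, huA, hvA, hpint⟩
      · intro j1 j2 hne x hx1 hx2
        rcases Fin.eq_castSucc_or_eq_last j1 with ⟨i1, rfl⟩ | rfl <;>
          rcases Fin.eq_castSucc_or_eq_last j2 with ⟨i2, rfl⟩ | rfl
        · rw [Fin.snoc_castSucc] at hx1 hx2
          exact hf.2 i1 i2 (fun h => hne (by rw [h])) x hx1 hx2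
        · rw [Fin.snoc_castSucc] at hx1
          rw [Fin.snoc_last] at hx2
          exact hpS x hx2 ⟨i1, hx1⟩
        · rw [Fin.snoc_last] at hx1
          rw [Fin.snoc_castSucc] at hx2
          exact hpS x hx1 ⟨i2, hx2⟩
        · exact hne rfl

lemma apathfam_le_card [Fintype V] {t : ℕ} {f : Fin t → Σ u : V, Σ v : V, G.Walk u v}
    (hf : APathFam G A t f) : t ≤ Fintype.card V := by
  have hinj : Function.Injective (fun i => (f i).1) := by
    intro i j hij
    by_contra hne
    have h1 : (f i).1 ∈ (f i).2.2.support := Walk.start_mem_support _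
    have h2 : (f i).1 ∈ (f j).2.2.support := by
      have hij' : (f i).1 = (f j).1 := hij
      rw [hij']
      exact Walk.start_mem_support _
    exact hf.2 i j hne (f i).1 h1 h2
  simpa using Fintype.card_le_of_injective _ hinj


end GallaiAux

/-- For every positive integer k, every finite graph G and every A ⊆ V(G), either G
contains k pairwise vertex-disjoint A-paths, or some vertex set X with |X| ≤ 4k meets
every A-path. -/
theorem gallai_Apaths_weak {V : Type*} [Fintype V] (G : SimpleGraph V) (A : Set V)
    (k : ℕ) (hk : 0 < k) :
    (∃ f : Fin k → Σ u : V, Σ v : V, G.Walk u v,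
      (∀ i, IsAPath G A (f i).2.2) ∧
      (∀ i j, i ≠ j → ∀ x, x ∈ (f i).2.2.support → x ∉ (f j).2.2.support)) ∨
    (∃ X : Finset V, X.card ≤ 4 * k ∧
      ∀ (u v : V) (p : G.Walk u v), IsAPath G A p → ∃ x ∈ X, x ∈ p.support) := by
  classical
  set Pred : ℕ → Prop :=
    fun t => ∃ f : Fin t → Σ u : V, Σ v : V, G.Walk u v, APathFam G A t f with hPredDef
  have hPred0 : Pred 0 :=
    ⟨fun i => i.elim0, fun i => i.elim0, fun i j _ _ _ => i.elim0⟩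
  have hbd : ∀ {t : ℕ}, Pred t → t ≤ Fintype.card V := by
    intro t ht
    obtain ⟨f, hf⟩ := ht
    exact apathfam_le_card hf
  have hPt0 : Pred (Nat.findGreatest Pred (Fintype.card V)) :=
    Nat.findGreatest_spec (Nat.zero_le _) hPred0
  set t0 := Nat.findGreatest Pred (Fintype.card V) with ht0
  have hmax : ¬ ∃ g : Fin (t0+1) → Σ u : V, Σ v : V, G.Walk u v, APathFam G A (t0+1) g := by
    intro hg
    have h1 : Pred (t0 + 1) := hg
    exact Nat.findGreatest_is_greatest (by omega) (hbd h1) h1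
  by_cases hkt : k ≤ t0
  · left
    obtain ⟨f, hf⟩ := hPt0
    refine ⟨fun i => f (Fin.castLE hkt i), fun i => hf.1 _, fun i j hne x hx => ?_⟩
    exact hf.2 _ _ (fun h => hne (Fin.castLE_injective hkt h)) x hx
  · right
    push_neg at hkt
    obtain ⟨f, hf⟩ := hPt0
    obtain ⟨X, hX1, hX2⟩ := hitting hf hmax
    exact ⟨X, le_trans hX1 (by omega), hX2⟩
end

section
/- For all positive integers k and ℓ, every finite simple graph G and every vertex set A ⊆ V(G), the graph G either contains k pairwise vertex-disjoint A-paths of length at least ℓ, or there is a vertex set X ⊆ V(G) with |X| ≤ 4kℓ that meets every A-path of length at least ℓ in G. -/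
open SimpleGraph

namespace EPUtil

variable {V : Type*} {G : SimpleGraph V}

/-- Split a walk at the first vertex belonging to a set `S`. -/
lemma prefix_until_set {u v : V} (p : G.Walk u v) (S : Set V)
    (h : ∃ x ∈ p.support, x ∈ S) :
    ∃ (w : V) (q : G.Walk u w) (r : G.Walk w v),
      w ∈ S ∧ p = q.append r ∧ (∀ x ∈ q.support, x ∈ S → x = w) := by
  induction p with
  | nil =>
    obtain ⟨x, hx, hxS⟩ := h
    simp only [Walk.support_nil, List.mem_singleton] at hx
    subst hx
    exact ⟨_, Walk.nil, Walk.nil, hxS, rfl, by simp⟩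
  | @cons a b c hadj p ih =>
    by_cases haS : a ∈ S
    · exact ⟨a, Walk.nil, Walk.cons hadj p, haS, rfl, by simp⟩
    · have h' : ∃ x ∈ p.support, x ∈ S := by
        obtain ⟨x, hx, hxS⟩ := h
        simp only [Walk.support_cons, List.mem_cons] at hx
        rcases hx with rfl | hx
        · exact absurd hxS haS
        · exact ⟨x, hx, hxS⟩
      obtain ⟨w, q, r, hwS, hpr, hq⟩ := ih h'
      refine ⟨w, Walk.cons hadj q, r, hwS, by rw [Walk.cons_append, ← hpr], ?_⟩
      intro x hx hxS
      simp only [Walk.support_cons, List.mem_cons] at hx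
      rcases hx with rfl | hx
      · exact absurd hxS haS
      · exact hq x hx hxS

/-- Take a suffix of a walk starting from the last vertex in a set `S`. -/
lemma suffix_from_last_set {u v : V} (p : G.Walk u v) (S : Set V)
    (h : ∃ x ∈ p.support, x ∈ S) :
    ∃ (w : V) (q : G.Walk w v),
      w ∈ S ∧ q.support ⊆ p.support ∧ (∀ e ∈ q.edges, e ∈ p.edges) ∧
      (p.IsPath → q.IsPath) ∧ (∀ x ∈ q.support, x ∈ S → x = w) := by
  have h' : ∃ x ∈ p.reverse.support, x ∈ S := by
    simpa [Walk.support_reverse] using h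
  obtain ⟨w, q, r, hwS, hpr, hq⟩ := prefix_until_set p.reverse S h'
  refine ⟨w, q.reverse, hwS, ?_, ?_, ?_, ?_⟩
  · intro x hx
    have : x ∈ p.reverse.support := by
      rw [hpr]
      exact Walk.subset_support_append_left _ _ (by simpa [Walk.support_reverse] using hx)
    simpa [Walk.support_reverse] using this
  · intro e he
    have h1 : e ∈ q.edges := by simpa [Walk.edges_reverse] using he
    have : e ∈ p.reverse.edges := by
      rw [hpr, Walk.edges_append]
      exact List.mem_append_left _ h1
    simpa [Walk.edges_reverse] using this
  · intro hp
    have : q.IsPath := by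
      have := hp.reverse
      rw [hpr] at this
      exact this.of_append_left
    exact this.reverse
  · intro x hx hxS
    exact hq x (by simpa [Walk.support_reverse] using hx) hxS

/-- Appending two paths which share only the junction vertex gives a path. -/
lemma isPath_append {u v w : V} {q : G.Walk u v} {r : G.Walk v w}
    (hq : q.IsPath) (hr : r.IsPath)
    (h : ∀ x ∈ q.support, x ∈ r.support → x = v) : (q.append r).IsPath := by
  rw [Walk.isPath_def, Walk.support_append]
  refine List.Nodup.append hq.support_nodup (hr.support_nodup.sublist (List.tail_sublist _)) ?_
  intro x hxq hxr
  have hx : x ∈ r.support := List.mem_of_mem_tail hxr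
  have hxv : x = v := h x hxq hx
  rw [hxv] at hxr
  have hsc : r.support = v :: r.support.tail := r.support_eq_cons
  have hnd := hr.support_nodup
  rw [hsc] at hnd
  exact (List.nodup_cons.mp hnd).1 hxr

/-- Vertices appearing in a prefix of a short walk are among the first `n` support
vertices. -/
lemma mem_take_of_prefix {u v w : V} {q : G.Walk u v} {r : G.Walk v w} {n : ℕ}
    (hlen : q.length + 1 ≤ n) : q.support ⊆ ((q.append r).support.take n) := by
  intro x hx
  rw [Walk.support_append, List.take_append]
  refine List.mem_append_left _ ?_
  rwa [List.take_of_length_le (by rw [Walk.length_support]; exact hlen)]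

end EPUtil

namespace EPUtil

variable {V : Type*} {G : SimpleGraph V}

/-- Split a path at two interior vertices `x ≠ y`, obtaining an initial segment up to
the first of them and a final segment from the second, which are disjoint. -/
lemma segment_split {u v x y : V} (P : G.Walk u v) (hP : P.IsPath)
    (hx : x ∈ P.support) (hy : y ∈ P.support) (hxy : x ≠ y) :
    ∃ (c d : V), ((c = x ∧ d = y) ∨ (c = y ∧ d = x)) ∧
    ∃ (J₁ : G.Walk u c) (J₂ : G.Walk d v),
      J₁.IsPath ∧ J₂.IsPath ∧ (∀ z ∈ J₁.support, z ∈ P.support) ∧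
      (∀ z ∈ J₂.support, z ∈ P.support) ∧
      (∀ z ∈ J₁.support, z ∉ J₂.support) ∧ d ∉ J₁.support ∧ c ∉ J₂.support ∧
      (∀ n, J₁.length + 1 ≤ n → c ∈ P.support.take n) ∧
      (∀ n, J₂.length + 1 ≤ n → d ∈ P.reverse.support.take n) := by
  classical
  obtain ⟨c, C, D, hcS, hPCD, hConly⟩ := prefix_until_set P {z | z = x ∨ z = y}
    ⟨x, hx, Or.inl rfl⟩
  -- identify d as the other vertex
  have hcd : ∃ d, ((c = x ∧ d = y) ∨ (c = y ∧ d = x)) := by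
    rcases hcS with rfl | rfl
    · exact ⟨y, Or.inl ⟨rfl, rfl⟩⟩
    · exact ⟨x, Or.inr ⟨rfl, rfl⟩⟩
  obtain ⟨d, hd⟩ := hcd
  have hdc : d ≠ c := by rcases hd with ⟨rfl, rfl⟩ | ⟨rfl, rfl⟩ <;> [exact hxy.symm; exact hxy]
  have hdP : d ∈ P.support := by rcases hd with ⟨rfl, rfl⟩ | ⟨rfl, rfl⟩ <;> assumption
  have hndP : (C.support ++ D.support.tail).Nodup := by
    have := hP.support_nodup
    rwa [hPCD, Walk.support_append] at this
  have hdisjCD : List.Disjoint C.support D.support.tail :=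
    List.disjoint_of_nodup_append hndP
  have hdnC : d ∉ C.support := fun hmem =>
    hdc (hConly d hmem (by rcases hd with ⟨rfl, rfl⟩ | ⟨rfl, rfl⟩; exact Or.inr rfl; exact Or.inl rfl))
  have hdD : d ∈ D.support := by
    have : d ∈ C.support ++ D.support.tail := by
      rw [← Walk.support_append, ← hPCD]; exact hdP
    rcases List.mem_append.mp this with h | h
    · exact absurd h hdnC
    · exact List.mem_of_mem_tail h
  obtain ⟨d', E, F, hd'S, hDEF, _⟩ := prefix_until_set D {z | z = d} ⟨d, hdD, rfl⟩
  have hd'd : d' = d := hd'S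
  subst hd'd
  -- D is a path
  have hD : D.IsPath := by
    have := hP; rw [hPCD] at this; exact this.of_append_right
  have hC : C.IsPath := by
    have := hP; rw [hPCD] at this; exact this.of_append_left
  have hF : F.IsPath := by
    have := hD; rw [hDEF] at this; exact this.of_append_right
  have hndD : (E.support ++ F.support.tail).Nodup := by
    have := hD.support_nodup
    rwa [hDEF, Walk.support_append] at this
  have hdisjEF : List.Disjoint E.support F.support.tail :=
    List.disjoint_of_nodup_append hndD
  -- D.support.tail = E.support.tail ++ F.support.tail
  have hDtail : D.support.tail = E.support.tail ++ F.support.tail := by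
    rw [hDEF, Walk.support_append, E.support_eq_cons]
    simp
  have hFtail_sub : ∀ z ∈ F.support.tail, z ∈ D.support.tail := by
    intro z hz; rw [hDtail]; exact List.mem_append_right _ hz
  have hcE : c ∈ E.support := E.start_mem_support
  -- c ∉ F.support
  have hcnF : c ∉ F.support := by
    intro hcF
    rw [F.support_eq_cons] at hcF
    rcases List.mem_cons.mp hcF with h1 | h1
    · exact hdc h1.symm
    · exact hdisjEF hcE h1
  -- main disjointness
  have hdisj : ∀ z ∈ C.support, z ∉ F.support := by
    intro z hzC hzF
    rw [F.support_eq_cons] at hzF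
    rcases List.mem_cons.mp hzF with h1 | h1
    · rw [h1] at hzC; exact hdnC hzC
    · exact hdisjCD hzC (hFtail_sub _ h1)
  refine ⟨c, d', hd, C, F, hC, hF, ?_, ?_, hdisj, hdnC, hcnF, ?_, ?_⟩
  · intro z hz; rw [hPCD]; exact Walk.subset_support_append_left _ _ hz
  · intro z hz
    rw [hPCD]
    refine Walk.subset_support_append_right _ _ ?_
    rw [hDEF]
    exact Walk.subset_support_append_right _ _ hz
  · intro n hn
    have := mem_take_of_prefix (q := C) (r := D) (n := n) hn
    rw [← hPCD] at this
    exact this C.end_mem_support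
  · intro n hn
    have hP' : P = (C.append E).append F := by rw [hPCD, hDEF, Walk.append_assoc]
    have hrev : P.reverse = F.reverse.append (C.append E).reverse := by
      rw [hP', Walk.reverse_append]
    have hlen : F.reverse.length + 1 ≤ n := by rwa [Walk.length_reverse]
    have := mem_take_of_prefix (q := F.reverse) (r := (C.append E).reverse) (n := n) hlen
    rw [← hrev] at this
    exact this F.reverse.end_mem_support

/-- Trim an `A`–`B` path so that it meets `A` only in its first vertex and `B` only in
its last vertex. -/
lemma exists_trimmed {A B : Set V} {a b : V} (p : G.Walk a b) (hp : p.IsPath)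
    (ha : a ∈ A) (hb : b ∈ B) :
    ∃ (a' b' : V) (q : G.Walk a' b'), q.IsPath ∧ a' ∈ A ∧ b' ∈ B ∧
      (∀ x ∈ q.support, x ∈ p.support) ∧
      (∀ x ∈ q.support, x ∈ B → x = b') ∧ (∀ x ∈ q.support, x ∈ A → x = a') := by
  obtain ⟨b', q₁, r, hb'B, hpq, hq₁B⟩ := prefix_until_set p B ⟨b, p.end_mem_support, hb⟩
  have hq₁path : q₁.IsPath := by
    have := hp; rw [hpq] at this; exact this.of_append_left
  have hq₁sub : ∀ x ∈ q₁.support, x ∈ p.support := by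
    intro x hx; rw [hpq]; exact Walk.subset_support_append_left _ _ hx
  obtain ⟨a', q, ha'A, hqsub, _, hqpath, hqA⟩ :=
    suffix_from_last_set q₁ A ⟨a, q₁.start_mem_support, ha⟩
  refine ⟨a', b', q, hqpath hq₁path, ha'A, hb'B, fun x hx => hq₁sub x (hqsub hx), ?_, hqA⟩
  intro x hx hxB
  exact hq₁B x (hqsub hx) hxB

end EPUtil

namespace EPUtil

variable {V : Type*} {G : SimpleGraph V}

/-- Two vertex-disjoint `A`–`B` paths. -/
def TwoDisj (H : SimpleGraph V) (A B : Set V) : Prop :=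
  ∃ (a₁ b₁ a₂ b₂ : V) (p₁ : H.Walk a₁ b₁) (p₂ : H.Walk a₂ b₂),
    p₁.IsPath ∧ p₂.IsPath ∧ a₁ ∈ A ∧ b₁ ∈ B ∧ a₂ ∈ A ∧ b₂ ∈ B ∧
    ∀ x ∈ p₁.support, x ∉ p₂.support

/-- `Y` meets every `A`–`B` path of `H`. -/
def IsCut (H : SimpleGraph V) (A B : Set V) (Y : Finset V) : Prop :=
  ∀ ⦃a b : V⦄ (p : H.Walk a b), p.IsPath → a ∈ A → b ∈ B → ∃ y ∈ Y, y ∈ p.support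

lemma twoDisj_mono {H H' : SimpleGraph V} (hle : H' ≤ H) {A B : Set V}
    (h : TwoDisj H' A B) : TwoDisj H A B := by
  obtain ⟨a₁, b₁, a₂, b₂, p₁, p₂, hp₁, hp₂, ha₁, hb₁, ha₂, hb₂, hdisj⟩ := h
  have he₁ : ∀ e ∈ p₁.edges, e ∈ H.edgeSet :=
    fun e he => (SimpleGraph.edgeSet_mono hle) (p₁.edges_subset_edgeSet he)
  have he₂ : ∀ e ∈ p₂.edges, e ∈ H.edgeSet :=
    fun e he => (SimpleGraph.edgeSet_mono hle) (p₂.edges_subset_edgeSet he)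
  refine ⟨a₁, b₁, a₂, b₂, p₁.transfer H he₁, p₂.transfer H he₂,
    hp₁.transfer _, hp₂.transfer _, ha₁, hb₁, ha₂, hb₂, ?_⟩
  rw [Walk.support_transfer, Walk.support_transfer]
  exact hdisj

lemma isCut_of_trimmed {H : SimpleGraph V} {A B : Set V} {Y : Finset V}
    (h : ∀ ⦃a b : V⦄ (p : H.Walk a b), p.IsPath → a ∈ A → b ∈ B →
      (∀ x ∈ p.support, x ∈ B → x = b) → (∀ x ∈ p.support, x ∈ A → x = a) →
      ∃ y ∈ Y, y ∈ p.support) : IsCut H A B Y := by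
  intro a b p hp ha hb
  obtain ⟨a', b', q, hq, ha', hb', hsub, hqB, hqA⟩ := exists_trimmed p hp ha hb
  obtain ⟨y, hy, hy'⟩ := h q hq ha' hb' hqB hqA
  exact ⟨y, hy, hsub y hy'⟩

/-- A prefix of a path ending at a non-terminal vertex avoids the endpoint. -/
lemma prefix_avoiding_end {u v w : V} (p : G.Walk u v) (hp : p.IsPath)
    (hw : w ∈ p.support) (hwv : w ≠ v) :
    ∃ q : G.Walk u w, (∀ x ∈ q.support, x ∈ p.support) ∧ v ∉ q.support := by
  obtain ⟨w', q, r, hw', hpqr, _⟩ := prefix_until_set p {z | z = w} ⟨w, hw, rfl⟩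
  have hww : w' = w := hw'
  subst hww
  have hnd : (q.support ++ r.support.tail).Nodup := by
    have := hp.support_nodup; rwa [hpqr, Walk.support_append] at this
  have hvr : v ∈ r.support.tail := Walk.end_mem_tail_support_of_ne hwv r
  refine ⟨q, ?_, ?_⟩
  · intro x hx; rw [hpqr]; exact Walk.subset_support_append_left _ _ hx
  · intro hv
    exact (List.disjoint_of_nodup_append hnd) hv hvr

end EPUtil

namespace EPUtil

variable {V : Type*} {G : SimpleGraph V}

lemma build_two {H H' : SimpleGraph V} (hle : H' ≤ H) {A B : Set V} {z y b₀ : V}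
    (hadj : H.Adj y b₀) (hb₀B : b₀ ∈ B)
    (hcutz : IsCut H' A B {z})
    (hzb₀ : z ≠ b₀)
    {a₁ a₂ b₁ : V} (Qy : H'.Walk a₁ y) (Qz : H'.Walk a₂ z) (R : H'.Walk z b₁)
    (hQy : Qy.IsPath) (hQz : Qz.IsPath) (hR : R.IsPath)
    (ha₁ : a₁ ∈ A) (ha₂ : a₂ ∈ A) (hb₁ : b₁ ∈ B)
    (hzQy : z ∉ Qy.support) (hyQz : y ∉ Qz.support)
    (hdisjQ : ∀ x ∈ Qy.support, x ∉ Qz.support)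
    (hb₀R : b₀ ∉ R.support) :
    TwoDisj H A B := by
  classical
  set Va : Set V := {w | ∃ a ∈ A, ∃ q : H'.Walk a w, z ∉ q.support} with hVa
  set Vb : Set V := {w | ∃ b ∈ B, ∃ q : H'.Walk b w, z ∉ q.support} with hVb
  have hVab : ∀ w, w ∈ Va → w ∈ Vb → False := by
    rintro w ⟨a, haA, qa, hza⟩ ⟨b, hbB, qb, hzb⟩
    have hW : z ∉ (qa.append qb.reverse).support := by
      intro hz
      rcases Walk.mem_support_append_iff _ _ |>.mp hz with h | h
      · exact hza h
      · rw [Walk.support_reverse] at h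
        exact hzb (List.mem_reverse.mp h)
    obtain ⟨y', hy', hy'mem⟩ := hcutz (qa.append qb.reverse).bypass
      (Walk.bypass_isPath _) haA hbB
    rw [Finset.mem_singleton] at hy'
    subst hy'
    exact hW (Walk.support_bypass_subset _ hy'mem)
  -- membership facts
  have hQy_Va : ∀ w ∈ Qy.support, w ∈ Va := by
    intro w hw
    obtain ⟨w', q, r, hw', hpqr, _⟩ := prefix_until_set Qy {x | x = w} ⟨w, hw, rfl⟩
    have hww : w' = w := hw'
    subst hww
    refine ⟨a₁, ha₁, q, fun hz => hzQy ?_⟩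
    rw [hpqr]
    exact Walk.subset_support_append_left _ _ hz
  have hQz_Va : ∀ w ∈ Qz.support, w ≠ z → w ∈ Va := by
    intro w hw hwz
    obtain ⟨q, hsub, hzq⟩ := prefix_avoiding_end Qz hQz hw hwz
    exact ⟨a₂, ha₂, q, hzq⟩
  have hR_Vb : ∀ w ∈ R.support, w ≠ z → w ∈ Vb := by
    intro w hw hwz
    have hw' : w ∈ R.reverse.support := by rwa [Walk.support_reverse, List.mem_reverse]
    obtain ⟨q, hsub, hzq⟩ := prefix_avoiding_end R.reverse hR.reverse hw' hwz
    exact ⟨b₁, hb₁, q, hzq⟩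
  have hb₀_Vb : b₀ ∈ Vb := ⟨b₀, hb₀B, Walk.nil, by simp [hzb₀]⟩
  -- F₁ := Qy (transferred) plus the edge y b₀
  have heQy : ∀ e ∈ Qy.edges, e ∈ H.edgeSet :=
    fun e he => (SimpleGraph.edgeSet_mono hle) (Qy.edges_subset_edgeSet he)
  set Qy' : H.Walk a₁ y := Qy.transfer H heQy with hQy'def
  have hQy'supp : Qy'.support = Qy.support := Walk.support_transfer _ _
  have hb₀Qy : b₀ ∉ Qy.support := fun hmem => hVab b₀ (hQy_Va b₀ hmem) hb₀_Vb
  set F₁ : H.Walk a₁ b₀ := Qy'.append (Walk.cons hadj Walk.nil) with hF₁def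
  have hF₁path : F₁.IsPath := by
    refine isPath_append (hQy.transfer _) ?_ ?_
    · rw [Walk.cons_isPath_iff]
      exact ⟨Walk.IsPath.nil, by simp [hadj.ne]⟩
    · intro x hx hx'
      simp only [Walk.support_cons, Walk.support_nil, List.mem_cons,
        List.not_mem_nil, or_false] at hx'
      rcases hx' with rfl | rfl
      · rfl
      · rw [hQy'supp] at hx
        exact absurd hx hb₀Qy
  have hF₁supp : ∀ x ∈ F₁.support, x ∈ Qy.support ∨ x = b₀ := by
    intro x hx
    rw [hF₁def] at hx
    rcases Walk.mem_support_append_iff _ _ |>.mp hx with h | h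
    · left; rwa [hQy'supp] at h
    · simp only [Walk.support_cons, Walk.support_nil, List.mem_cons,
        List.not_mem_nil, or_false] at h
      rcases h with rfl | rfl
      · left; rw [← hQy'supp]; exact Qy'.end_mem_support
      · right; rfl
  -- F₂ := Qz ++ R inside H', then transferred
  have hQzR : ∀ x ∈ Qz.support, x ∈ R.support → x = z := by
    intro x hxQ hxR
    by_contra hxz
    exact hVab x (hQz_Va x hxQ hxz) (hR_Vb x hxR hxz)
  have hF₂path' : (Qz.append R).IsPath := isPath_append hQz hR hQzR
  have heF₂ : ∀ e ∈ (Qz.append R).edges, e ∈ H.edgeSet :=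
    fun e he => (SimpleGraph.edgeSet_mono hle) ((Qz.append R).edges_subset_edgeSet he)
  set F₂ : H.Walk a₂ b₁ := (Qz.append R).transfer H heF₂ with hF₂def
  have hF₂path : F₂.IsPath := hF₂path'.transfer _
  have hF₂supp : ∀ x ∈ F₂.support, x ∈ Qz.support ∨ x ∈ R.support := by
    intro x hx
    rw [hF₂def, Walk.support_transfer] at hx
    rcases Walk.mem_support_append_iff _ _ |>.mp hx with h | h
    · left; exact h
    · right; exact h
  refine ⟨a₁, b₀, a₂, b₁, F₁, F₂, hF₁path, hF₂path, ha₁, hb₀B, ha₂, hb₁, ?_⟩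
  intro x hx hx'
  rcases hF₁supp x hx with hxQy | hxb
  · rcases hF₂supp x hx' with hxQz | hxR
    · exact hdisjQ x hxQy hxQz
    · by_cases hxz : x = z
      · rw [hxz] at hxQy; exact hzQy hxQy
      · exact hVab x (hQy_Va x hxQy) (hR_Vb x hxR hxz)
  · rcases hF₂supp x hx' with hxQz | hxR
    · have hxz : x ≠ z := fun h => hzb₀ (by rw [← h, hxb])
      have hxVb : x ∈ Vb := by rw [hxb]; exact hb₀_Vb
      exact hVab x (hQz_Va x hxQz hxz) hxVb
    · rw [hxb] at hxR
      exact hb₀R hxR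

end EPUtil

namespace EPUtil

variable {V : Type*}

/-- Trim an `A`–`S` path so that it meets `S` only at its end and `A` only at its
start. -/
lemma trimAS {H' : SimpleGraph V} {A S : Set V} {α w : V} (q : H'.Walk α w)
    (hq : q.IsPath) (hα : α ∈ A) (hw : w ∈ S) :
    ∃ (α' w' : V) (Q : H'.Walk α' w'), Q.IsPath ∧ α' ∈ A ∧ w' ∈ S ∧
      (∀ x ∈ Q.support, x ∈ q.support) ∧
      (∀ x ∈ Q.support, x ∈ S → x = w') ∧ (∀ x ∈ Q.support, x ∈ A → x = α') := by
  obtain ⟨w', σ, ρ, hw', heq, hσS⟩ := prefix_until_set q S ⟨w, q.end_mem_support, hw⟩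
  have hσpath : σ.IsPath := by
    have := hq; rw [heq] at this; exact this.of_append_left
  have hσsub : ∀ x ∈ σ.support, x ∈ q.support := by
    intro x hx; rw [heq]; exact Walk.subset_support_append_left _ _ hx
  obtain ⟨α', Q, hα', hQsub, _, hQpath, hQA⟩ :=
    suffix_from_last_set σ A ⟨α, σ.start_mem_support, hα⟩
  exact ⟨α', w', Q, hQpath hσpath, hα', hw', fun x hx => hσsub x (hQsub hx),
    fun x hx hxS => hσS x (hQsub hx) hxS, hQA⟩

theorem menger_le_one [Fintype V] (H : SimpleGraph V) (A B : Set V) :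
    TwoDisj H A B ∨ ∃ Y : Finset V, Y.card ≤ 1 ∧ IsCut H A B Y := by
  classical
  suffices h : ∀ (n : ℕ) (H : SimpleGraph V), H.edgeSet.ncard = n → ∀ A B : Set V,
      TwoDisj H A B ∨ ∃ Y : Finset V, Y.card ≤ 1 ∧ IsCut H A B Y by
    exact h _ H rfl A B
  intro n
  induction n using Nat.strong_induction_on with
  | _ n IH =>
  intro H hn A B
  by_cases h2 : TwoDisj H A B
  · exact Or.inl h2
  right
  by_cases hex : ∃ (a b : V) (p : H.Walk a b), p.IsPath ∧ a ∈ A ∧ b ∈ B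
  swap
  · refine ⟨∅, by simp, ?_⟩
    intro a b p hp ha hb
    exact absurd ⟨a, b, p, hp, ha, hb⟩ hex
  obtain ⟨a₀', b₀', p₀, hp₀, ha₀', hb₀'⟩ := hex
  obtain ⟨a₀, b₀, P, hPpath, ha₀, hb₀, hPsub, hPB, hPA⟩ := exists_trimmed p₀ hp₀ ha₀' hb₀'
  by_cases hP0 : P.length = 0
  · have hab : a₀ = b₀ := Walk.eq_of_length_eq_zero hP0
    by_cases hall : ∀ (a b : V) (p : H.Walk a b), p.IsPath → a ∈ A → b ∈ B → a₀ ∈ p.support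
    · exact ⟨{a₀}, by simp, fun a b p hp ha hb => ⟨a₀, by simp, hall a b p hp ha hb⟩⟩
    · exfalso; apply h2
      push_neg at hall
      obtain ⟨a, b, p, hp, ha, hb, hmem⟩ := hall
      have ha₀B : a₀ ∈ B := by rw [hab]; exact hb₀
      refine ⟨a, b, a₀, a₀, p, Walk.nil, hp, Walk.IsPath.nil, ha, hb, ha₀, ha₀B, ?_⟩
      intro x hx hx'
      simp only [Walk.support_nil, List.mem_singleton] at hx'
      rw [hx'] at hx
      exact hmem hx
  -- length ≥ 1 : extract the last edge
  obtain ⟨y, hadj, q', hPrev⟩ :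
      ∃ (y : V) (hadj : H.Adj b₀ y) (q' : H.Walk y a₀), P.reverse = Walk.cons hadj q' := by
    cases hPr : P.reverse with
    | nil =>
      exfalso
      apply hP0
      have := congrArg Walk.length hPr
      simpa [Walk.length_reverse] using this
    | cons h q => exact ⟨_, h, q, rfl⟩
  have hPdecomp : P = q'.reverse.append (Walk.cons hadj.symm Walk.nil) := by
    conv_lhs => rw [← P.reverse_reverse, hPrev, Walk.reverse_cons]
  set pre : H.Walk a₀ y := q'.reverse with hpre
  have hyP : y ∈ P.support := by
    rw [hPdecomp]
    exact Walk.subset_support_append_left _ _ pre.end_mem_support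
  have hyb₀ : y ≠ b₀ := fun h => H.irrefl (h ▸ hadj)
  have hyB : y ∉ B := fun hyBmem => hyb₀ (hPB y hyP hyBmem)
  set e : Sym2 V := s(y, b₀) with he
  have heH : e ∈ H.edgeSet := by rw [he, SimpleGraph.mem_edgeSet]; exact hadj.symm
  set H' := H.deleteEdges {e} with hH'
  have hle : H' ≤ H := SimpleGraph.deleteEdges_le _
  have hE' : H'.edgeSet = H.edgeSet \ {e} := SimpleGraph.edgeSet_deleteEdges _
  have hlt : H'.edgeSet.ncard < n := by
    rw [← hn, hE']
    refine Set.ncard_lt_ncard ?_ (H.edgeSet.toFinite)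
    rw [Set.ssubset_iff_of_subset Set.diff_subset]
    exact ⟨e, heH, by simp⟩
  have htrans : ∀ {a b : V} (p : H.Walk a b), e ∉ p.edges →
      ∀ e' ∈ p.edges, e' ∈ H'.edgeSet := by
    intro a b p hep e' he'
    rw [hE']
    exact ⟨p.edges_subset_edgeSet he', fun h => hep ((Set.mem_singleton_iff.mp h) ▸ he')⟩
  have hb₀mem : ∀ {a b : V} (p : H.Walk a b), e ∈ p.edges → b₀ ∈ p.support := by
    intro a b p hep
    exact Walk.snd_mem_support_of_mem_edges p hep
  rcases IH _ hlt H' rfl A B with h2' | ⟨Y₁, hY₁card, hY₁cut⟩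
  · exact absurd (twoDisj_mono hle h2') h2
  by_cases hexH' : ∃ (a b : V) (p : H'.Walk a b), p.IsPath ∧ a ∈ A ∧ b ∈ B
  swap
  · refine ⟨{b₀}, by simp, isCut_of_trimmed ?_⟩
    intro a b p hp ha hb hpB hpA
    by_cases hep : e ∈ p.edges
    · exact ⟨b₀, by simp, hb₀mem p hep⟩
    · exact absurd ⟨a, b, p.transfer H' (htrans p hep), hp.transfer _, ha, hb⟩ hexH'
  obtain ⟨as, bs, ps, hps, has, hbs⟩ := hexH'
  obtain ⟨z, hY₁z⟩ : ∃ z, Y₁ = {z} := by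
    obtain ⟨y', hy', _⟩ := hY₁cut ps hps has hbs
    exact Finset.card_eq_one.mp (le_antisymm hY₁card (Finset.card_pos.mpr ⟨y', hy'⟩))
  subst hY₁z
  have hcutz : IsCut H' A B {z} := hY₁cut
  have hzmem : ∀ {a b : V} (p : H.Walk a b), e ∉ p.edges → p.IsPath → a ∈ A → b ∈ B →
      z ∈ p.support := by
    intro a b p hep hp ha hb
    obtain ⟨y', hy', hmem⟩ := hcutz (p.transfer H' (htrans p hep)) (hp.transfer _) ha hb
    rw [Finset.mem_singleton] at hy'
    rw [hy'] at hmem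
    rwa [Walk.support_transfer] at hmem
  by_cases hzb : z = b₀
  · refine ⟨{b₀}, by simp, isCut_of_trimmed ?_⟩
    intro a b p hp ha hb hpB hpA
    by_cases hep : e ∈ p.edges
    · exact ⟨b₀, by simp, hb₀mem p hep⟩
    · exact ⟨b₀, by simp, hzb ▸ hzmem p hep hp ha hb⟩
  by_cases hzB2 : ∀ (c : V) (r : H'.Walk z c), r.IsPath → c ∈ B → b₀ ∈ r.support
  · refine ⟨{b₀}, by simp, isCut_of_trimmed ?_⟩
    intro a b p hp ha hb hpB hpA
    by_cases hep : e ∈ p.edges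
    · exact ⟨b₀, by simp, hb₀mem p hep⟩
    · set p' := p.transfer H' (htrans p hep) with hp'def
      have hzp' : z ∈ p'.support := by
        rw [hp'def, Walk.support_transfer]
        exact hzmem p hep hp ha hb
      have hmem : b₀ ∈ (p'.dropUntil z hzp').support :=
        hzB2 b (p'.dropUntil z hzp') (hp.transfer _ |>.dropUntil _) hb
      refine ⟨b₀, by simp, ?_⟩
      have := Walk.support_dropUntil_subset p' hzp' hmem
      rwa [hp'def, Walk.support_transfer] at this
  push_neg at hzB2
  obtain ⟨c, r₀, hr₀, hcB, hb₀r₀⟩ := hzB2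
  obtain ⟨b₁, R, rest, hb₁B, hr₀eq, hRB⟩ :=
    prefix_until_set r₀ B ⟨c, r₀.end_mem_support, hcB⟩
  have hRpath : R.IsPath := by
    have := hr₀; rw [hr₀eq] at this; exact this.of_append_left
  have hRsub : ∀ x ∈ R.support, x ∈ r₀.support := by
    intro x hx; rw [hr₀eq]; exact Walk.subset_support_append_left _ _ hx
  have hb₀R : b₀ ∉ R.support := fun h => hb₀r₀ (hRsub _ h)
  set S : Set V := {z, y} with hS
  rcases IH _ hlt H' rfl A S with hdisjAS | ⟨T, hTcard, hTcut⟩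
  · exfalso; apply h2
    obtain ⟨α₁, w₁, α₂, w₂, q₁, q₂, hq₁, hq₂, hα₁, hw₁, hα₂, hw₂, hdisj12⟩ := hdisjAS
    obtain ⟨α₁', w₁', Q₁, hQ₁path, hα₁', hw₁', hQ₁sub, hQ₁S, _⟩ := trimAS q₁ hq₁ hα₁ hw₁
    obtain ⟨α₂', w₂', Q₂, hQ₂path, hα₂', hw₂', hQ₂sub, hQ₂S, _⟩ := trimAS q₂ hq₂ hα₂ hw₂
    have hww : w₁' ≠ w₂' := by
      intro hcon
      exact hdisj12 w₁' (hQ₁sub _ Q₁.end_mem_support)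
        (hcon ▸ hQ₂sub _ Q₂.end_mem_support)
    have hdisjQ12 : ∀ x ∈ Q₁.support, x ∉ Q₂.support :=
      fun x hx hx' => hdisj12 x (hQ₁sub _ hx) (hQ₂sub _ hx')
    simp only [hS, Set.mem_insert_iff, Set.mem_singleton_iff] at hw₁' hw₂'
    have hzy : z ≠ y := by
      rcases hw₁' with rfl | rfl <;> rcases hw₂' with rfl | rfl
      · exact absurd rfl hww
      · exact fun h => hww h
      · exact fun h => hww h.symm
      · exact absurd rfl hww
    rcases hw₁' with rfl | rfl
    · -- w₁' = z : Qz := Q₁, Qy := Q₂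
      rcases hw₂' with rfl | rfl
      · exact absurd rfl hww
      · refine build_two hle hadj.symm hb₀ hcutz hzb Q₂ Q₁ R hQ₂path hQ₁path hRpath
          hα₂' hα₁' hb₁B ?_ ?_ (fun x hx hx' => hdisjQ12 x hx' hx) hb₀R
        · intro hmem
          exact hzy (hQ₂S _ hmem (by simp [hS]))
        · intro hmem
          exact hzy (hQ₁S _ hmem (by simp [hS])).symm
    · rcases hw₂' with rfl | rfl
      · refine build_two hle hadj.symm hb₀ hcutz hzb Q₁ Q₂ R hQ₁path hQ₂path hRpath
          hα₁' hα₂' hb₁B ?_ ?_ hdisjQ12 hb₀R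
        · intro hmem
          exact hzy (hQ₁S _ hmem (by simp [hS]))
        · intro hmem
          exact hzy (hQ₂S _ hmem (by simp [hS])).symm
      · exact absurd rfl hww
  · -- cut T works in H
    refine ⟨T, hTcard, isCut_of_trimmed ?_⟩
    intro a b p hp ha hb hpB hpA
    by_cases hep : e ∈ p.edges
    · -- use the prefix of p up to y
      have hyp : y ∈ p.support := Walk.fst_mem_support_of_mem_edges p hep
      have hb₀p : b₀ ∈ p.support := hb₀mem p hep
      have hb₀b : b₀ = b := hpB b₀ hb₀p hb₀
      set π := p.takeUntil y hyp with hπdef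
      have hπpath : π.IsPath := hp.takeUntil _
      have hπsub : ∀ x ∈ π.support, x ∈ p.support :=
        fun x hx => Walk.support_takeUntil_subset p hyp hx
      have hyb : y ≠ b := fun h => hyB (h ▸ hb)
      have hbπ : b ∉ π.support := by
        have hspec := p.take_spec hyp
        have hnd : (π.support ++ (p.dropUntil y hyp).support.tail).Nodup := by
          have := hp.support_nodup
          rw [← hspec, Walk.support_append] at this
          exact this
        have hbtail : b ∈ (p.dropUntil y hyp).support.tail :=
          Walk.end_mem_tail_support_of_ne hyb _
        exact fun hbmem => (List.disjoint_of_nodup_append hnd) hbmem hbtail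
      have heπ : e ∉ π.edges := by
        intro hmem
        have := Walk.snd_mem_support_of_mem_edges π hmem
        rw [hb₀b] at this
        exact hbπ this
      set π' := π.transfer H' (htrans π heπ) with hπ'def
      have hyπ' : y ∈ π'.support := by
        rw [hπ'def, Walk.support_transfer]
        exact π.end_mem_support
      obtain ⟨s', σ, ρ, hs', hπeq, _⟩ := prefix_until_set π' S ⟨y, hyπ', by simp [hS]⟩
      have hπ'path : π'.IsPath := by
        rw [hπ'def]; exact hπpath.transfer _
      have hσpath : σ.IsPath := by
        have h0 := hπ'path
        rw [hπeq] at h0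
        exact h0.of_append_left
      obtain ⟨t, ht, htmem⟩ := hTcut σ hσpath ha hs'
      refine ⟨t, ht, ?_⟩
      have h1 : t ∈ π'.support := by
        rw [hπeq]; exact Walk.subset_support_append_left _ _ htmem
      rw [hπ'def, Walk.support_transfer] at h1
      exact hπsub t h1
    · set p' := p.transfer H' (htrans p hep) with hp'def
      have hzp' : z ∈ p'.support := by
        rw [hp'def, Walk.support_transfer]
        exact hzmem p hep hp ha hb
      obtain ⟨s', σ, ρ, hs', hpeq, _⟩ := prefix_until_set p' S ⟨z, hzp', by simp [hS]⟩
      have hp'path : p'.IsPath := by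
        rw [hp'def]; exact hp.transfer _
      have hσpath : σ.IsPath := by
        have h0 := hp'path
        rw [hpeq] at h0
        exact h0.of_append_left
      obtain ⟨t, ht, htmem⟩ := hTcut σ hσpath ha hs'
      refine ⟨t, ht, ?_⟩
      have h1 : t ∈ p'.support := by
        rw [hpeq]; exact Walk.subset_support_append_left _ _ htmem
      rwa [hp'def, Walk.support_transfer] at h1

end EPUtil

namespace EPUtil

variable {V : Type*}

/-- The graph `G` restricted to edges avoiding `Z`. -/
def restrict (G : SimpleGraph V) (Z : Set V) : SimpleGraph V where
  Adj a b := G.Adj a b ∧ a ∉ Z ∧ b ∉ Z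
  symm := ⟨fun a b h => ⟨h.1.symm, h.2.2, h.2.1⟩⟩
  loopless := ⟨fun a h => G.loopless.irrefl a h.1⟩

lemma restrict_le (G : SimpleGraph V) (Z : Set V) : restrict G Z ≤ G := fun _ _ h => h.1

lemma restrict_support {G : SimpleGraph V} {Z : Set V} {u v : V}
    (p : (restrict G Z).Walk u v) (hlen : 1 ≤ p.length) : ∀ x ∈ p.support, x ∉ Z := by
  induction p with
  | nil => simp at hlen
  | @cons a b c hadj p' ih =>
    intro x hx
    rcases List.mem_cons.mp (by simpa [Walk.support_cons] using hx) with rfl | hx'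
    · exact hadj.2.1
    · cases p' with
      | nil =>
        simp only [Walk.support_nil, List.mem_singleton] at hx'
        rw [hx']
        exact hadj.2.2
      | cons h2 p'' =>
        exact ih (by simp [Walk.length_cons]) x hx'

lemma restrict_edges {G : SimpleGraph V} {Z : Set V} {u v : V} (p : G.Walk u v)
    (h : ∀ x ∈ p.support, x ∉ Z) : ∀ e' ∈ p.edges, e' ∈ (restrict G Z).edgeSet := by
  intro e' he'
  induction e' using Sym2.ind with
  | _ a b =>
    rw [SimpleGraph.mem_edgeSet]
    exact ⟨(SimpleGraph.mem_edgeSet G).mp (p.edges_subset_edgeSet he'),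
      h a (p.fst_mem_support_of_mem_edges he'),
      h b (p.snd_mem_support_of_mem_edges he')⟩

end EPUtil

namespace EPUtil

variable {V : Type*}

/-- `n` pairwise vertex-disjoint long `A`-paths. -/
def Pack (G : SimpleGraph V) (A : Set V) (ℓ n : ℕ) : Prop :=
  ∃ f : Fin n → Σ u : V, Σ v : V, G.Walk u v,
    (∀ i, IsAPath G A (f i).2.2 ∧ ℓ ≤ (f i).2.2.length) ∧
    (∀ i j, i ≠ j → ∀ x, x ∈ (f i).2.2.support → x ∉ (f j).2.2.support)

lemma pack_zero (G : SimpleGraph V) (A : Set V) (ℓ : ℕ) : Pack G A ℓ 0 :=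
  ⟨fun i => i.elim0, fun i => i.elim0, fun i => i.elim0⟩

lemma pack_le_card [Fintype V] {G : SimpleGraph V} {A : Set V} {ℓ n : ℕ}
    (h : Pack G A ℓ n) : n ≤ Fintype.card V := by
  obtain ⟨f, _, hdisj⟩ := h
  have hinj : Function.Injective (fun i => (f i).1) := by
    intro i j hij
    by_contra hne
    refine hdisj i j hne (f i).1 (f i).2.2.start_mem_support ?_
    simp only at hij
    rw [hij]
    exact (f j).2.2.start_mem_support
  simpa using Fintype.card_le_of_injective _ hinj

/-- The key exchange: two disjoint `A`–`M` connectors to the middle of one path of the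
family allow us to enlarge the family. -/
lemma exchange_core [Fintype V] {G : SimpleGraph V} {A : Set V} {ℓ s : ℕ} (hℓ : 0 < ℓ)
    (F : Fin s → Σ u : V, Σ v : V, G.Walk u v)
    (hF : ∀ i, IsAPath G A (F i).2.2 ∧ ℓ ≤ (F i).2.2.length)
    (hFdisj : ∀ i j, i ≠ j → ∀ x, x ∈ (F i).2.2.support → x ∉ (F j).2.2.support)
    (i : Fin s) {αc αd c d : V}
    (Sc : G.Walk αc c) (Sd : G.Walk αd d)
    (J₁ : G.Walk (F i).1 c) (J₂ : G.Walk d (F i).2.1)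
    (hScP : Sc.IsPath) (hSdP : Sd.IsPath) (hJ₁P : J₁.IsPath) (hJ₂P : J₂.IsPath)
    (hαcA : αc ∈ A) (hαdA : αd ∈ A)
    (hJ₁len : ℓ ≤ J₁.length) (hJ₂len : ℓ ≤ J₂.length)
    (hScW : ∀ x ∈ Sc.support, x ≠ c → ∀ j, x ∉ (F j).2.2.support)
    (hSdW : ∀ x ∈ Sd.support, x ≠ d → ∀ j, x ∉ (F j).2.2.support)
    (hScA : ∀ x ∈ Sc.support, x ∈ A → x = αc)
    (hSdA : ∀ x ∈ Sd.support, x ∈ A → x = αd)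
    (hcA : c ∉ A) (hdA : d ∉ A)
    (hSdisj : ∀ x ∈ Sc.support, x ∉ Sd.support)
    (hJ₁sub : ∀ z ∈ J₁.support, z ∈ (F i).2.2.support)
    (hJ₂sub : ∀ z ∈ J₂.support, z ∈ (F i).2.2.support)
    (hJdisj : ∀ z ∈ J₁.support, z ∉ J₂.support)
    (hdJ₁ : d ∉ J₁.support) (hcJ₂ : c ∉ J₂.support) :
    Pack G A ℓ (s + 1) := by
  classical
  obtain ⟨hPiAP, hPilen⟩ := hF i
  obtain ⟨hPipath, hPilen1, huiA, hviA, hPiA⟩ := hPiAP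
  have hviJ₁ : (F i).2.1 ∉ J₁.support := by
    intro hmem
    exact hJdisj _ hmem J₂.end_mem_support
  have huiJ₂ : (F i).1 ∉ J₂.support := by
    intro hmem
    exact hJdisj _ J₁.start_mem_support hmem
  -- the two new paths
  set B₁ : G.Walk αc (F i).1 := Sc.append J₁.reverse with hB₁def
  set B₂ : G.Walk αd (F i).2.1 := Sd.append J₂ with hB₂def
  have hB₁supp : ∀ x ∈ B₁.support, x ∈ Sc.support ∨ x ∈ J₁.support := by
    intro x hx
    rw [hB₁def] at hx
    rcases Walk.mem_support_append_iff _ _ |>.mp hx with h | h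
    · exact Or.inl h
    · right; rwa [Walk.support_reverse, List.mem_reverse] at h
  have hB₂supp : ∀ x ∈ B₂.support, x ∈ Sd.support ∨ x ∈ J₂.support := by
    intro x hx
    rw [hB₂def] at hx
    rcases Walk.mem_support_append_iff _ _ |>.mp hx with h | h
    · exact Or.inl h
    · exact Or.inr h
  have hB₁path : B₁.IsPath := by
    refine isPath_append hScP hJ₁P.reverse ?_
    intro x hx hx'
    rw [Walk.support_reverse, List.mem_reverse] at hx'
    by_contra hxc
    exact hScW x hx hxc i (hJ₁sub x hx')
  have hB₂path : B₂.IsPath := by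
    refine isPath_append hSdP hJ₂P ?_
    intro x hx hx'
    by_contra hxd
    exact hSdW x hx hxd i (hJ₂sub x hx')
  have hB₁len : ℓ ≤ B₁.length := by
    rw [hB₁def, Walk.length_append, Walk.length_reverse]
    omega
  have hB₂len : ℓ ≤ B₂.length := by
    rw [hB₂def, Walk.length_append]
    omega
  have hB₁AP : IsAPath G A B₁ := by
    refine ⟨hB₁path, by omega, hαcA, huiA, ?_⟩
    intro x hx hxA
    rcases hB₁supp x hx with h | h
    · exact Or.inl (hScA x h hxA)
    · rcases hPiA x (hJ₁sub x h) hxA with h1 | h1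
      · exact Or.inr h1
      · exact absurd (h1 ▸ h) hviJ₁
  have hB₂AP : IsAPath G A B₂ := by
    refine ⟨hB₂path, by omega, hαdA, hviA, ?_⟩
    intro x hx hxA
    rcases hB₂supp x hx with h | h
    · exact Or.inl (hSdA x h hxA)
    · rcases hPiA x (hJ₂sub x h) hxA with h1 | h1
      · exact absurd (h1 ▸ h) huiJ₂
      · exact Or.inr h1
  -- disjointness of the new paths from each other
  have hB₁B₂ : ∀ x ∈ B₁.support, x ∉ B₂.support := by
    intro x hx hx'
    rcases hB₁supp x hx with h | h <;> rcases hB₂supp x hx' with h' | h'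
    · exact hSdisj x h h'
    · by_cases hxc : x = c
      · rw [hxc] at h'; exact hcJ₂ h'
      · exact hScW x h hxc i (hJ₂sub x h')
    · by_cases hxd : x = d
      · rw [hxd] at h; exact hdJ₁ h
      · exact hSdW x h' hxd i (hJ₁sub x h)
    · exact hJdisj x h h'
  -- disjointness from the other members of the family
  have hB₁F : ∀ j, j ≠ i → ∀ x ∈ B₁.support, x ∉ (F j).2.2.support := by
    intro j hj x hx hx'
    rcases hB₁supp x hx with h | h
    · by_cases hxc : x = c
      · rw [hxc] at hx'
        exact hFdisj i j (fun hh => hj hh.symm) c (hJ₁sub c J₁.end_mem_support) hx'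
      · exact hScW x h hxc j hx'
    · exact hFdisj i j (fun hh => hj hh.symm) x (hJ₁sub x h) hx'
  have hB₂F : ∀ j, j ≠ i → ∀ x ∈ B₂.support, x ∉ (F j).2.2.support := by
    intro j hj x hx hx'
    rcases hB₂supp x hx with h | h
    · by_cases hxd : x = d
      · rw [hxd] at hx'
        exact hFdisj i j (fun hh => hj hh.symm) d (hJ₂sub d J₂.start_mem_support) hx'
      · exact hSdW x h hxd j hx'
    · exact hFdisj i j (fun hh => hj hh.symm) x (hJ₂sub x h) hx'
  -- the new family
  set g : Fin (s + 1) → Σ u : V, Σ v : V, G.Walk u v := fun j =>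
    if h : (j : ℕ) < s then
      (if (j : ℕ) = (i : ℕ) then ⟨αc, (F i).1, B₁⟩ else F ⟨(j : ℕ), h⟩)
    else ⟨αd, (F i).2.1, B₂⟩ with hgdef
  -- helper to analyze g
  have hg : ∀ j : Fin (s + 1),
      (g j = ⟨αc, (F i).1, B₁⟩ ∧ (j : ℕ) = (i : ℕ)) ∨
      (g j = ⟨αd, (F i).2.1, B₂⟩ ∧ (j : ℕ) = s) ∨
      (∃ (h : (j : ℕ) < s), g j = F ⟨(j : ℕ), h⟩ ∧ (j : ℕ) ≠ (i : ℕ)) := by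
    intro j
    by_cases h : (j : ℕ) < s
    · by_cases h' : (j : ℕ) = (i : ℕ)
      · left; exact ⟨by simp [hgdef, h, h'], h'⟩
      · right; right; exact ⟨h, by simp [hgdef, h, h'], h'⟩
    · right; left
      refine ⟨by simp [hgdef, h], ?_⟩
      have := j.isLt
      omega
  refine ⟨g, ?_, ?_⟩
  · intro j
    rcases hg j with ⟨hgj, _⟩ | ⟨hgj, _⟩ | ⟨h, hgj, _⟩ <;> rw [hgj]
    · exact ⟨hB₁AP, hB₁len⟩
    · exact ⟨hB₂AP, hB₂len⟩
    · exact hF _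
  · intro j₁ j₂ hne x hx
    have hvalne : (j₁ : ℕ) ≠ (j₂ : ℕ) := fun h => hne (Fin.ext h)
    rcases hg j₁ with ⟨hgj₁, hv₁⟩ | ⟨hgj₁, hv₁⟩ | ⟨h₁, hgj₁, hv₁⟩ <;>
      rcases hg j₂ with ⟨hgj₂, hv₂⟩ | ⟨hgj₂, hv₂⟩ | ⟨h₂, hgj₂, hv₂⟩ <;>
      rw [hgj₁] at hx <;> rw [hgj₂]
    · exact absurd (hv₁.trans hv₂.symm) hvalne
    · exact hB₁B₂ x hx
    · exact hB₁F ⟨(j₂ : ℕ), h₂⟩ (fun hh => hv₂ (congrArg Fin.val hh)) x hx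
    · exact fun hx' => hB₁B₂ x hx' hx
    · exact absurd (hv₁.trans hv₂.symm) hvalne
    · exact hB₂F ⟨(j₂ : ℕ), h₂⟩ (fun hh => hv₂ (congrArg Fin.val hh)) x hx
    · exact fun hx' => hB₁F ⟨(j₁ : ℕ), h₁⟩ (fun hh => hv₁ (congrArg Fin.val hh)) x hx' hx
    · exact fun hx' => hB₂F ⟨(j₁ : ℕ), h₁⟩ (fun hh => hv₁ (congrArg Fin.val hh)) x hx' hx
    · exact hFdisj ⟨(j₁ : ℕ), h₁⟩ ⟨(j₂ : ℕ), h₂⟩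
        (fun hh => hvalne (by simpa using congrArg Fin.val hh)) x hx
end EPUtil

open EPUtil in
theorem long_Apaths_EP' {V : Type*} [Fintype V] (G : SimpleGraph V) (A : Set V)
    (k ℓ : ℕ) (hk : 0 < k) (hℓ : 0 < ℓ) :
    Pack G A ℓ k ∨
    (∃ X : Finset V, X.card ≤ 4 * k * ℓ ∧
      ∀ (u v : V) (p : G.Walk u v), IsAPath G A p → ℓ ≤ p.length →
        ∃ x ∈ X, x ∈ p.support) := by
  classical
  set s := Nat.findGreatest (Pack G A ℓ) (Fintype.card V) with hsdef
  have hPs : Pack G A ℓ s := Nat.findGreatest_spec (Nat.zero_le _) (pack_zero G A ℓ)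
  by_cases hks : k ≤ s
  · left
    obtain ⟨f, hf, hdisj⟩ := hPs
    exact ⟨fun i => f (Fin.castLE hks i), fun i => hf _,
      fun i j hij x hx => hdisj _ _ (fun h => hij (Fin.castLE_injective hks h)) x hx⟩
  · right
    have hsk : s < k := Nat.not_le.mp hks
    have hnP : ¬ Pack G A ℓ (s + 1) := by
      intro hP
      exact absurd hP (Nat.findGreatest_is_greatest (hsdef ▸ Nat.lt_succ_self s)
        (pack_le_card hP))
    obtain ⟨F, hF, hFdisj⟩ := hPs
    set Ends : Fin s → Finset V := fun i =>
      ((F i).2.2.support.take ℓ).toFinset ∪ ((F i).2.2.reverse.support.take ℓ).toFinset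
      with hEnds
    set W : Set V := {x | ∃ i, x ∈ (F i).2.2.support} with hW
    set M : Fin s → Set V := fun i => {x | x ∈ (F i).2.2.support ∧ x ∉ Ends i} with hM
    set Z : Fin s → Set V := fun i => {x | x ∈ W ∧ x ∉ M i} with hZ
    set Aset : Set V := {x | x ∈ A ∧ x ∉ W} with hAset
    have hEndsCard : ∀ i, (Ends i).card ≤ 2 * ℓ := by
      intro i
      refine le_trans (Finset.card_union_le _ _) ?_
      have h1 := List.toFinset_card_le ((F i).2.2.support.take ℓ)
      have h2 := List.toFinset_card_le ((F i).2.2.reverse.support.take ℓ)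
      have h3 := List.length_take_le ℓ (F i).2.2.support
      have h4 := List.length_take_le ℓ (F i).2.2.reverse.support
      omega
    have hsingle : ∀ (w : V) (l : List V), w ∈ (w :: l).take ℓ := by
      intro w l
      obtain ⟨m, rfl⟩ : ∃ m, ℓ = m + 1 := ⟨ℓ - 1, by omega⟩
      simp [List.take_succ_cons]
    have hstart_Ends : ∀ i, (F i).1 ∈ Ends i := by
      intro i
      refine Finset.mem_union_left _ (List.mem_toFinset.mpr ?_)
      rw [(F i).2.2.support_eq_cons]
      exact hsingle _ _
    have hend_Ends : ∀ i, (F i).2.1 ∈ Ends i := by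
      intro i
      refine Finset.mem_union_right _ (List.mem_toFinset.mpr ?_)
      rw [(F i).2.2.reverse.support_eq_cons]
      exact hsingle _ _
    have hM_not_A : ∀ i, ∀ x, x ∈ M i → x ∉ A := by
      rintro i x ⟨hxP, hxE⟩ hxA
      rcases (hF i).1.2.2.2.2 x hxP hxA with rfl | rfl
      · exact hxE (hstart_Ends i)
      · exact hxE (hend_Ends i)
    have key : ∀ i : Fin s, ∃ Y : Finset V, Y.card ≤ 1 ∧
        IsCut (restrict G (Z i)) Aset (M i) Y := by
      intro i
      rcases menger_le_one (restrict G (Z i)) Aset (M i) with htwo | hcut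
      · exfalso
        apply hnP
        obtain ⟨a₁, m₁, a₂, m₂, S₁, S₂, hS₁, hS₂, ha₁, hm₁, ha₂, hm₂, hdisjS⟩ := htwo
        have hS₁len : 1 ≤ S₁.length := by
          by_contra hcon
          have h0 : S₁.length = 0 := by omega
          have : a₁ = m₁ := Walk.eq_of_length_eq_zero h0
          exact ha₁.2 (this ▸ ⟨i, hm₁.1⟩)
        have hS₂len : 1 ≤ S₂.length := by
          by_contra hcon
          have h0 : S₂.length = 0 := by omega
          have : a₂ = m₂ := Walk.eq_of_length_eq_zero h0
          exact ha₂.2 (this ▸ ⟨i, hm₂.1⟩)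
        have hS₁Z := restrict_support S₁ hS₁len
        have hS₂Z := restrict_support S₂ hS₂len
        set S₁g := S₁.transfer G (fun e he =>
          (SimpleGraph.edgeSet_mono (restrict_le G (Z i))) (S₁.edges_subset_edgeSet he))
          with hS₁gdef
        set S₂g := S₂.transfer G (fun e he =>
          (SimpleGraph.edgeSet_mono (restrict_le G (Z i))) (S₂.edges_subset_edgeSet he))
          with hS₂gdef
        have hS₁gsupp : S₁g.support = S₁.support := Walk.support_transfer _ _
        have hS₂gsupp : S₂g.support = S₂.support := Walk.support_transfer _ _
        obtain ⟨α₁, m₁', T₁, hT₁path, hα₁, hm₁', hT₁sub, hT₁M, hT₁Aset⟩ :=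
          trimAS S₁g (by rw [hS₁gdef]; exact hS₁.transfer _) ha₁ hm₁
        obtain ⟨α₂, m₂', T₂, hT₂path, hα₂, hm₂', hT₂sub, hT₂M, hT₂Aset⟩ :=
          trimAS S₂g (by rw [hS₂gdef]; exact hS₂.transfer _) ha₂ hm₂
        have hT₁sub' : ∀ x ∈ T₁.support, x ∈ S₁.support := by
          intro x hx; rw [← hS₁gsupp]; exact hT₁sub x hx
        have hT₂sub' : ∀ x ∈ T₂.support, x ∈ S₂.support := by
          intro x hx; rw [← hS₂gsupp]; exact hT₂sub x hx
        have hmm : m₁' ≠ m₂' := by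
          intro hcon
          exact hdisjS m₁' (hT₁sub' _ T₁.end_mem_support)
            (hcon ▸ hT₂sub' _ T₂.end_mem_support)
        have hT₁T₂ : ∀ x ∈ T₁.support, x ∉ T₂.support :=
          fun x hx hx' => hdisjS x (hT₁sub' x hx) (hT₂sub' x hx')
        have hT₁W : ∀ x ∈ T₁.support, x ≠ m₁' → ∀ j, x ∉ (F j).2.2.support := by
          intro x hx hne j hx'
          have hxZ : x ∉ Z i := hS₁Z x (hT₁sub' x hx)
          have hxW : x ∈ W := ⟨j, hx'⟩
          have hxM : x ∈ M i := by
            by_contra hcon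
            exact hxZ ⟨hxW, hcon⟩
          exact hne (hT₁M x hx hxM)
        have hT₂W : ∀ x ∈ T₂.support, x ≠ m₂' → ∀ j, x ∉ (F j).2.2.support := by
          intro x hx hne j hx'
          have hxZ : x ∉ Z i := hS₂Z x (hT₂sub' x hx)
          have hxW : x ∈ W := ⟨j, hx'⟩
          have hxM : x ∈ M i := by
            by_contra hcon
            exact hxZ ⟨hxW, hcon⟩
          exact hne (hT₂M x hx hxM)
        have hT₁A : ∀ x ∈ T₁.support, x ∈ A → x = α₁ := by
          intro x hx hxA
          by_cases hxW : x ∈ W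
          · exfalso
            have hxZ : x ∉ Z i := hS₁Z x (hT₁sub' x hx)
            have hxM : x ∈ M i := by
              by_contra hcon
              exact hxZ ⟨hxW, hcon⟩
            exact hM_not_A i x hxM hxA
          · exact hT₁Aset x hx ⟨hxA, hxW⟩
        have hT₂A : ∀ x ∈ T₂.support, x ∈ A → x = α₂ := by
          intro x hx hxA
          by_cases hxW : x ∈ W
          · exfalso
            have hxZ : x ∉ Z i := hS₂Z x (hT₂sub' x hx)
            have hxM : x ∈ M i := by
              by_contra hcon
              exact hxZ ⟨hxW, hcon⟩
            exact hM_not_A i x hxM hxA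
          · exact hT₂Aset x hx ⟨hxA, hxW⟩
        obtain ⟨c, d, hcd, J₁, J₂, hJ₁P, hJ₂P, hJ₁sub, hJ₂sub, hJdisj, hdJ₁, hcJ₂,
          htake₁, htake₂⟩ := segment_split (F i).2.2 (hF i).1.1 hm₁'.1 hm₂'.1 hmm
        have hcM : c ∈ M i := by rcases hcd with ⟨rfl, _⟩ | ⟨rfl, _⟩ <;> assumption
        have hdM : d ∈ M i := by rcases hcd with ⟨_, rfl⟩ | ⟨_, rfl⟩ <;> assumption
        have hJ₁len : ℓ ≤ J₁.length := by
          by_contra hcon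
          refine hcM.2 (Finset.mem_union_left _ (List.mem_toFinset.mpr ?_))
          exact htake₁ ℓ (by omega)
        have hJ₂len : ℓ ≤ J₂.length := by
          by_contra hcon
          refine hdM.2 (Finset.mem_union_right _ (List.mem_toFinset.mpr ?_))
          exact htake₂ ℓ (by omega)
        rcases hcd with ⟨hc, hd⟩ | ⟨hc, hd⟩
        · subst hc; subst hd
          exact exchange_core hℓ F hF hFdisj i T₁ T₂ J₁ J₂ hT₁path hT₂path hJ₁P hJ₂P
            hα₁.1 hα₂.1 hJ₁len hJ₂len hT₁W hT₂W hT₁A hT₂A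
            (hM_not_A i _ hcM) (hM_not_A i _ hdM) hT₁T₂ hJ₁sub hJ₂sub hJdisj hdJ₁ hcJ₂
        · subst hc; subst hd
          exact exchange_core hℓ F hF hFdisj i T₂ T₁ J₁ J₂ hT₂path hT₁path hJ₁P hJ₂P
            hα₂.1 hα₁.1 hJ₁len hJ₂len hT₂W hT₁W hT₂A hT₁A
            (hM_not_A i _ hcM) (hM_not_A i _ hdM)
            (fun x hx hx' => hT₁T₂ x hx' hx) hJ₁sub hJ₂sub hJdisj hdJ₁ hcJ₂
      · exact hcut
    choose Y hYcard hYcut using key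
    refine ⟨Finset.univ.biUnion (fun i => Ends i ∪ Y i), ?_, ?_⟩
    · refine le_trans (Finset.card_biUnion_le) ?_
      have hone : ∀ i ∈ Finset.univ, (Ends i ∪ Y i).card ≤ 2 * ℓ + 1 := by
        intro i _
        refine le_trans (Finset.card_union_le _ _) ?_
        have := hEndsCard i
        have := hYcard i
        omega
      refine le_trans (Finset.sum_le_sum hone) ?_
      rw [Finset.sum_const, Finset.card_univ, Fintype.card_fin, smul_eq_mul]
      have h1 : s * (2 * ℓ + 1) = s * (2 * ℓ) + s := by ring
      have h2 : s * (2 * ℓ) ≤ k * (2 * ℓ) := Nat.mul_le_mul_right _ (le_of_lt hsk)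
      have h3 : s ≤ k * (2 * ℓ) := by
        calc s ≤ k := le_of_lt hsk
        _ = k * 1 := by ring
        _ ≤ k * (2 * ℓ) := Nat.mul_le_mul_left _ (by omega)
      have h4 : k * (2 * ℓ) + k * (2 * ℓ) = 4 * k * ℓ := by ring
      omega
    · intro u v p hAp hlenp
      by_contra hmiss
      push_neg at hmiss
      by_cases hpW : ∃ x ∈ p.support, x ∈ W
      · obtain ⟨w, q, r, hwW, hpeq, hqW⟩ := prefix_until_set p W hpW
        obtain ⟨i₀, hwP⟩ := hwW
        have hppath : p.IsPath := hAp.1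
        have hqpath : q.IsPath := by
          have := hppath; rw [hpeq] at this; exact this.of_append_left
        have hqsub : ∀ x ∈ q.support, x ∈ p.support := by
          intro x hx; rw [hpeq]; exact Walk.subset_support_append_left _ _ hx
        have hwp : w ∈ p.support := hqsub w q.end_mem_support
        have hwEnds : w ∉ Ends i₀ := by
          intro h
          exact hmiss w (Finset.mem_biUnion.mpr ⟨i₀, Finset.mem_univ _,
            Finset.mem_union_left _ h⟩) hwp
        have hwM : w ∈ M i₀ := ⟨hwP, hwEnds⟩
        obtain ⟨a', q₂, ha', hq₂sub, _, hq₂path', hq₂A⟩ :=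
          suffix_from_last_set q A ⟨u, q.start_mem_support, hAp.2.2.1⟩
        have hq₂path : q₂.IsPath := hq₂path' hqpath
        have hwA : w ∉ A := hM_not_A i₀ w hwM
        have ha'w : a' ≠ w := fun h => hwA (h ▸ ha')
        have ha'W : a' ∉ W := by
          intro h
          exact ha'w (hqW a' (hq₂sub q₂.start_mem_support) h)
        have hq₂Z : ∀ x ∈ q₂.support, x ∉ Z i₀ := by
          rintro x hx ⟨hxW, hxM⟩
          have := hqW x (hq₂sub hx) hxW
          rw [this] at hxM
          exact hxM hwM
        obtain ⟨t, htY, htmem⟩ := hYcut i₀ (q₂.transfer _ (restrict_edges q₂ hq₂Z))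
          (hq₂path.transfer _) ⟨ha', ha'W⟩ hwM
        rw [Walk.support_transfer] at htmem
        exact hmiss t (Finset.mem_biUnion.mpr ⟨i₀, Finset.mem_univ _,
          Finset.mem_union_right _ htY⟩) (hqsub t (hq₂sub htmem))
      · push_neg at hpW
        apply hnP
        set g : Fin (s + 1) → Σ u : V, Σ v : V, G.Walk u v := fun j =>
          if h : (j : ℕ) < s then F ⟨(j : ℕ), h⟩ else ⟨u, v, p⟩ with hgdef
        have hg : ∀ j : Fin (s + 1), (∃ (h : (j : ℕ) < s), g j = F ⟨(j : ℕ), h⟩) ∨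
            (g j = ⟨u, v, p⟩ ∧ (j : ℕ) = s) := by
          intro j
          by_cases h : (j : ℕ) < s
          · exact Or.inl ⟨h, by simp [hgdef, h]⟩
          · refine Or.inr ⟨by simp [hgdef, h], ?_⟩
            have := j.isLt
            omega
        have hpF : ∀ j, ∀ x ∈ p.support, x ∉ (F j).2.2.support :=
          fun j x hx hx' => hpW x hx ⟨j, hx'⟩
        refine ⟨g, ?_, ?_⟩
        · intro j
          rcases hg j with ⟨h, hgj⟩ | ⟨hgj, _⟩ <;> rw [hgj]
          · exact hF _
          · exact ⟨hAp, hlenp⟩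
        · intro j₁ j₂ hne x hx
          have hvalne : (j₁ : ℕ) ≠ (j₂ : ℕ) := fun h => hne (Fin.ext h)
          rcases hg j₁ with ⟨h₁, hgj₁⟩ | ⟨hgj₁, hv₁⟩ <;>
            rcases hg j₂ with ⟨h₂, hgj₂⟩ | ⟨hgj₂, hv₂⟩ <;>
            rw [hgj₁] at hx <;> rw [hgj₂]
          · exact hFdisj ⟨(j₁ : ℕ), h₁⟩ ⟨(j₂ : ℕ), h₂⟩
              (fun hh => hvalne (by simpa using congrArg Fin.val hh)) x hx
          · exact fun hx' => hpF ⟨(j₁ : ℕ), h₁⟩ x hx' hx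
          · exact hpF ⟨(j₂ : ℕ), h₂⟩ x hx
          · exact absurd (hv₁.trans hv₂.symm) hvalne


/-- Long A-paths have the Erdős–Pósa property: either k pairwise vertex-disjoint
A-paths of length at least ℓ, or a hitting set of size at most 4kℓ. -/
theorem long_Apaths_EP {V : Type*} [Fintype V] (G : SimpleGraph V) (A : Set V)
    (k ℓ : ℕ) (hk : 0 < k) (hℓ : 0 < ℓ) :
    (∃ f : Fin k → Σ u : V, Σ v : V, G.Walk u v,
      (∀ i, IsAPath G A (f i).2.2 ∧ ℓ ≤ (f i).2.2.length) ∧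
      (∀ i j, i ≠ j → ∀ x, x ∈ (f i).2.2.support → x ∉ (f j).2.2.support)) ∨
    (∃ X : Finset V, X.card ≤ 4 * k * ℓ ∧
      ∀ (u v : V) (p : G.Walk u v), IsAPath G A p → ℓ ≤ p.length →
        ∃ x ∈ X, x ∈ p.support) := by
  rcases long_Apaths_EP' G A k ℓ hk hℓ with h | h
  · exact Or.inl h
  · exact Or.inr h
end

section
/- For every positive integer k and every integer ℓ ≥ 2, there exist a finite simple graph G and a vertex set A ⊆ V(G) such that G does not contain k pairwise vertex-disjoint A-paths of length at least ℓ, yet every vertex set X ⊆ V(G) that meets every A-path of length at least ℓ satisfies |X| ≥ (k − 1)(ℓ − 1). -/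
open SimpleGraph

namespace LAPaux

variable (k ℓ : ℕ)

abbrev V' := Fin (k - 1) × Fin (2 * ℓ - 3) × Fin 3

def G' : SimpleGraph (V' k ℓ) where
  Adj u v := u.1 = v.1 ∧
    ((u.2.2 = 0 ∧ v.2.2 = 0 ∧ u.2.1 ≠ v.2.1) ∨
     (u.2.1 = v.2.1 ∧ ((u.2.2 = 0 ∧ v.2.2 ≠ 0) ∨ (u.2.2 ≠ 0 ∧ v.2.2 = 0))))
  symm := by
    constructor
    rintro ⟨a, b, c⟩ ⟨d, e, f⟩ ⟨h1, h2⟩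
    refine ⟨h1.symm, ?_⟩
    simp only at *
    tauto
  loopless := by
    constructor
    rintro ⟨a, b, c⟩ ⟨-, h⟩
    simp only at h
    tauto

def A' : Set (V' k ℓ) := {v | v.2.2 ≠ 0}

variable {k ℓ}

lemma adj_fst {u v : V' k ℓ} (h : (G' k ℓ).Adj u v) : u.1 = v.1 := h.1

lemma walk_fst {u v : V' k ℓ} (p : (G' k ℓ).Walk u v) : ∀ x ∈ p.support, x.1 = u.1 := by
  induction p with
  | nil => intro x hx; simp at hx; subst hx; rfl
  | cons h q ih =>
    intro x hx
    rw [Walk.support_cons] at hx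
    rcases List.mem_cons.mp hx with rfl | hx
    · rfl
    · rw [ih x hx]; exact (adj_fst h).symm

/-- The clique vertices in the support of a long A-path: at least ℓ-1 of them. -/
lemma key_count {u v : V' k ℓ} (p : (G' k ℓ).Walk u v)
    (hp : IsAPath (G' k ℓ) (A' k ℓ) p) (hl : ℓ ≤ p.length) :
    ℓ - 1 ≤ (p.support.toFinset.filter (fun x => x.2.2 = 0)).card := by
  have hnd : p.support.Nodup := hp.1.support_nodup
  have hcard : p.support.toFinset.card = p.length + 1 := by
    rw [List.toFinset_card_of_nodup hnd, Walk.length_support]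
  have hsplit := Finset.card_filter_add_card_filter_not
    (s := p.support.toFinset) (fun x : V' k ℓ => x.2.2 = 0)
  have hne : (p.support.toFinset.filter (fun x => ¬ x.2.2 = 0)).card ≤ 2 := by
    have hsub : p.support.toFinset.filter (fun x => ¬ x.2.2 = 0) ⊆ {u, v} := by
      intro x hx
      simp only [Finset.mem_filter, List.mem_toFinset] at hx
      rcases hp.2.2.2.2 x hx.1 hx.2 with rfl | rfl <;> simp
    calc (p.support.toFinset.filter (fun x => ¬ x.2.2 = 0)).card
        ≤ ({u, v} : Finset (V' k ℓ)).card := Finset.card_le_card hsub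
      _ ≤ 2 := Finset.card_le_two
  omega

lemma clique_finset_card (c : Fin (k - 1)) :
    (Finset.univ.filter (fun x : V' k ℓ => x.1 = c ∧ x.2.2 = 0)).card = 2 * ℓ - 3 := by
  have : Finset.univ.filter (fun x : V' k ℓ => x.1 = c ∧ x.2.2 = 0)
      = Finset.univ.image (fun j : Fin (2 * ℓ - 3) => ((c, j, 0) : V' k ℓ)) := by
    ext ⟨a, b, d⟩
    simp only [Finset.mem_filter, Finset.mem_univ, true_and, Finset.mem_image]
    constructor
    · rintro ⟨rfl, rfl⟩; exact ⟨b, rfl⟩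
    · rintro ⟨j, h⟩; cases h; exact ⟨rfl, rfl⟩
  rw [this, Finset.card_image_of_injective _ (fun a b h => by
    simpa using congrArg (fun x : V' k ℓ => x.2.1) h)]
  simp


/-- A walk through the clique of component `c` along the indices `j :: l`. -/
def cw (c : Fin (k - 1)) : (j : Fin (2 * ℓ - 3)) → (l : List (Fin (2 * ℓ - 3))) →
    List.Chain (· ≠ ·) j l → (G' k ℓ).Walk (c, j, 0) (c, l.getLastD j, 0)
  | _, [], _ => Walk.nil
  | j, j' :: l, h =>
    ((Walk.cons (⟨rfl, Or.inl ⟨rfl, rfl, (List.chain_cons.mp h).1⟩⟩ :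
        (G' k ℓ).Adj (c, j, 0) (c, j', 0))
      (cw c j' l (List.chain_cons.mp h).2)).copy rfl (by rw [List.getLastD_cons]))

lemma cw_length (c : Fin (k - 1)) : ∀ (j : Fin (2 * ℓ - 3)) (l : List (Fin (2 * ℓ - 3)))
    (h : List.Chain (· ≠ ·) j l), (cw c j l h).length = l.length
  | _, [], _ => rfl
  | j, j' :: l, h => by
    simp only [cw, Walk.length_copy, Walk.length_cons, cw_length c j' l, List.length_cons]
    exact congrArg (· + 1) (cw_length c j' l _)

lemma cw_support (c : Fin (k - 1)) : ∀ (j : Fin (2 * ℓ - 3)) (l : List (Fin (2 * ℓ - 3)))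
    (h : List.Chain (· ≠ ·) j l),
    (cw c j l h).support = (j :: l).map (fun x => ((c, x, 0) : V' k ℓ))
  | _, [], _ => rfl
  | j, j' :: l, h => by
    simp only [cw, Walk.support_copy, Walk.support_cons, cw_support c j' l, List.map_cons]
    exact congrArg ((c, j, 0) :: ·) (cw_support c j' l _)


/-- From a nonempty nodup list of free indices of length ≥ ℓ-1 in component `c`,
build a long A-path all of whose vertices have component `c` and index in the list. -/
lemma exists_long_path (hℓ : 2 ≤ ℓ) (c : Fin (k - 1)) (j : Fin (2 * ℓ - 3))
    (l : List (Fin (2 * ℓ - 3))) (hnd : (j :: l).Nodup) (hlen : ℓ - 1 ≤ (j :: l).length) :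
    ∃ (u v : V' k ℓ) (p : (G' k ℓ).Walk u v),
      IsAPath (G' k ℓ) (A' k ℓ) p ∧ ℓ ≤ p.length ∧
      ∀ x ∈ p.support, x.1 = c ∧ x.2.1 ∈ j :: l := by
  set e := l.getLastD j with he
  have hch : List.Chain (· ≠ ·) j l := hnd.isChain
  have h1 : (G' k ℓ).Adj (c, j, 1) (c, j, 0) :=
    ⟨rfl, Or.inr ⟨rfl, Or.inr ⟨(by decide : (1:Fin 3) ≠ 0), rfl⟩⟩⟩
  have h2 : (G' k ℓ).Adj (c, e, 0) (c, e, 2) :=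
    ⟨rfl, Or.inr ⟨rfl, Or.inl ⟨rfl, (by decide : (2:Fin 3) ≠ 0)⟩⟩⟩
  set W : (G' k ℓ).Walk (c, j, 1) (c, e, 2) := Walk.cons h1 ((cw c j l hch).concat h2) with hW
  have hsup : W.support
      = (c, j, 1) :: ((j :: l).map (fun x => ((c, x, 0) : V' k ℓ)) ++ [(c, e, 2)]) := by
    rw [hW, Walk.support_cons, Walk.support_concat, cw_support]
  have hlen' : W.length = l.length + 2 := by
    rw [hW, Walk.length_cons, Walk.length_concat, cw_length]
  have hmem : ∀ x ∈ W.support,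
      x = (c, j, 1) ∨ x = (c, e, 2) ∨ (x.1 = c ∧ x.2.1 ∈ j :: l ∧ x.2.2 = 0) := by
    intro x hx
    rw [hsup] at hx
    rcases List.mem_cons.mp hx with rfl | hx
    · exact Or.inl rfl
    rcases List.mem_append.mp hx with hx | hx
    · obtain ⟨y, hy, rfl⟩ := List.mem_map.mp hx
      exact Or.inr (Or.inr ⟨rfl, hy, rfl⟩)
    · simp only [List.mem_singleton] at hx
      exact Or.inr (Or.inl hx)
  refine ⟨(c, j, 1), (c, e, 2), W, ⟨?_, ?_, ?_, ?_, ?_⟩, ?_, ?_⟩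
  · rw [Walk.isPath_def, hsup]
    refine List.nodup_cons.mpr ⟨?_, List.Nodup.append ?_ ?_ ?_⟩
    · intro hc
      rcases List.mem_append.mp hc with hc | hc
      · obtain ⟨y, -, hy⟩ := List.mem_map.mp hc
        have := congrArg (fun z : V' k ℓ => z.2.2) hy
        simp at this
      · simp only [List.mem_singleton, Prod.mk.injEq] at hc
        exact absurd hc.2.2 (by decide)
    · exact hnd.map (fun a b hab => by simpa [Prod.ext_iff] using hab)
    · exact List.nodup_singleton _
    · intro x hx hx2
      obtain ⟨y, -, rfl⟩ := List.mem_map.mp hx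
      simp only [List.mem_singleton, Prod.mk.injEq] at hx2
      exact absurd hx2.2.2 (by decide)
  · rw [List.length_cons] at hlen; omega
  · exact (by decide : (1 : Fin 3) ≠ 0)
  · exact (by decide : (2 : Fin 3) ≠ 0)
  · intro x hx hxA
    rcases hmem x hx with rfl | rfl | ⟨-, -, h0⟩
    · exact Or.inl rfl
    · exact Or.inr rfl
    · exact absurd h0 hxA
  · rw [List.length_cons] at hlen; omega
  · intro x hx
    rcases hmem x hx with rfl | rfl | ⟨h1', h2', -⟩
    · exact ⟨rfl, List.mem_cons_self⟩
    · exact ⟨rfl, List.getLastD_mem_cons⟩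
    · exact ⟨h1', h2'⟩

end LAPaux

/-- Lower bound for long A-paths: there is a graph with no k disjoint long A-paths in
which every hitting set for long A-paths has at least (k-1)(ℓ-1) vertices. -/
theorem long_Apaths_lower_bound (k ℓ : ℕ) (hk : 0 < k) (hℓ : 2 ≤ ℓ) :
    ∃ (V : Type) (_ : Fintype V) (G : SimpleGraph V) (A : Set V),
      (¬ ∃ f : Fin k → Σ u : V, Σ v : V, G.Walk u v,
        (∀ i, IsAPath G A (f i).2.2 ∧ ℓ ≤ (f i).2.2.length) ∧
        (∀ i j, i ≠ j → ∀ x, x ∈ (f i).2.2.support → x ∉ (f j).2.2.support)) ∧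
      (∀ X : Finset V,
        (∀ (u v : V) (p : G.Walk u v), IsAPath G A p → ℓ ≤ p.length →
          ∃ x ∈ X, x ∈ p.support) →
        (k - 1) * (ℓ - 1) ≤ X.card) := by
  classical
  refine ⟨LAPaux.V' k ℓ, inferInstance, LAPaux.G' k ℓ, LAPaux.A' k ℓ, ?_, ?_⟩
  · rintro ⟨f, hf1, hf2⟩
    have hkk : Fintype.card (Fin (k - 1)) < Fintype.card (Fin k) := by
      simpa using Nat.sub_lt hk one_pos
    obtain ⟨i, j, hij, hcij⟩ :=
      Fintype.exists_ne_map_eq_of_card_lt (fun i => ((f i).1).1) hkk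
    set c : Fin (k - 1) := ((f i).1).1 with hc
    set S : Fin k → Finset (LAPaux.V' k ℓ) :=
      fun m => (f m).2.2.support.toFinset.filter (fun x => x.2.2 = 0) with hS
    have hScard : ∀ m, ℓ - 1 ≤ (S m).card :=
      fun m => LAPaux.key_count _ (hf1 m).1 (hf1 m).2
    have hSsub : ∀ m, ((f m).1).1 = c →
        S m ⊆ Finset.univ.filter (fun x : LAPaux.V' k ℓ => x.1 = c ∧ x.2.2 = 0) := by
      intro m hm x hx
      simp only [hS, Finset.mem_filter, List.mem_toFinset] at hx
      simp only [Finset.mem_filter, Finset.mem_univ, true_and]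
      exact ⟨(LAPaux.walk_fst _ x hx.1).trans hm, hx.2⟩
    have hdisj : Disjoint (S i) (S j) := by
      rw [Finset.disjoint_left]
      intro x hxi hxj
      simp only [hS, Finset.mem_filter, List.mem_toFinset] at hxi hxj
      exact hf2 i j hij x hxi.1 hxj.1
    have hcup : (S i ∪ S j).card
        ≤ (Finset.univ.filter (fun x : LAPaux.V' k ℓ => x.1 = c ∧ x.2.2 = 0)).card :=
      Finset.card_le_card (Finset.union_subset (hSsub i rfl) (hSsub j hcij.symm))
    rw [LAPaux.clique_finset_card c] at hcup
    rw [Finset.card_union_of_disjoint hdisj] at hcup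
    have h1 := hScard i
    have h2 := hScard j
    omega
  · intro X hX
    rw [Finset.card_eq_sum_card_fiberwise
      (f := fun x : LAPaux.V' k ℓ => x.1) (t := Finset.univ) (fun x _ => Finset.mem_univ _)]
    have hfiber : ∀ c : Fin (k - 1),
        ℓ - 1 ≤ (X.filter (fun x => x.1 = c)).card := by
      intro c
      by_contra hcon
      push_neg at hcon
      set bad : Finset (Fin (2 * ℓ - 3)) :=
        (X.filter (fun x => x.1 = c)).image (fun x => x.2.1) with hbad
      have hbadcard : bad.card ≤ ℓ - 2 := by
        have := Finset.card_image_le (s := X.filter (fun x => x.1 = c))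
          (f := fun x : LAPaux.V' k ℓ => x.2.1)
        rw [← hbad] at this
        omega
      have hfreecard : ℓ - 1 ≤ badᶜ.card := by
        rw [Finset.card_compl, Fintype.card_fin]
        omega
      have hne : badᶜ.toList ≠ [] := by
        intro h
        have := Finset.length_toList badᶜ
        rw [h] at this
        simp at this
        omega
      obtain ⟨j, l, hjl⟩ := List.exists_cons_of_ne_nil hne
      have hnd : (j :: l).Nodup := hjl ▸ Finset.nodup_toList badᶜ
      have hlen : ℓ - 1 ≤ (j :: l).length := by
        rw [← hjl, Finset.length_toList]; exact hfreecard
      obtain ⟨u, v, p, hp, hpl, hmem⟩ :=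
        LAPaux.exists_long_path hℓ c j l hnd hlen
      obtain ⟨x, hxX, hxsup⟩ := hX u v p hp hpl
      obtain ⟨hx1, hx2⟩ := hmem x hxsup
      have hxbad : x.2.1 ∈ bad :=
        Finset.mem_image_of_mem _ (Finset.mem_filter.mpr ⟨hxX, hx1⟩)
      have hxfree : x.2.1 ∈ badᶜ := by
        rw [← Finset.mem_toList, hjl]; exact hx2
      exact (Finset.mem_compl.mp hxfree) hxbad
    calc (k - 1) * (ℓ - 1) = ∑ _c : Fin (k - 1), (ℓ - 1) := by
          simp [Finset.sum_const, Finset.card_univ, mul_comm]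
      _ ≤ _ := Finset.sum_le_sum (fun c _ => hfiber c)
end

section
/- For every positive integer k, there exist a finite simple graph G and a vertex set A ⊆ V(G) such that G does not contain k pairwise vertex-disjoint A-paths of even length, yet every vertex set X ⊆ V(G) that meets every even-length A-path satisfies |X| ≥ 3(k − 1). -/
open SimpleGraph

abbrev Sidx : Fin 5 ⊕ Fin 5 → Fin 5 := Sum.elim id id

def Gk (n : ℕ) : SimpleGraph (Fin n × (Fin 5 ⊕ Fin 5)) where
  Adj a b := a ≠ b ∧ a.1 = b.1 ∧ ((a.2.isLeft ∧ b.2.isLeft) ∨ Sidx a.2 = Sidx b.2)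
  symm := by
    constructor
    rintro a b ⟨h1, h2, h3⟩
    exact ⟨fun h => h1 h.symm, h2.symm, by tauto⟩
  loopless := ⟨fun a h => h.1 rfl⟩

lemma pendant_adj {n : ℕ} {a b : Fin n × (Fin 5 ⊕ Fin 5)} {i : Fin 5}
    (ha : a.2 = Sum.inr i) (h : (Gk n).Adj a b) : b.2 = Sum.inl i := by
  obtain ⟨hne, hcopy, hor⟩ := h
  rcases hor with ⟨hl, _⟩ | hidx
  · rw [ha] at hl; simp at hl
  · rw [ha] at hidx
    rcases hb : b.2 with j | j
    · rw [hb] at hidx; simpa using hidx.symm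
    · exfalso
      rw [hb] at hidx
      simp only [Sidx, Sum.elim_inr, id] at hidx
      exact hne (Prod.ext hcopy (by rw [ha, hb, hidx]))

lemma walk_copy {n : ℕ} {u v : Fin n × (Fin 5 ⊕ Fin 5)} (p : (Gk n).Walk u v) :
    ∀ x ∈ p.support, x.1 = u.1 := by
  induction p with
  | nil => simp
  | cons h p ih =>
    intro x hx
    rw [Walk.support_cons, List.mem_cons] at hx
    rcases hx with rfl | hx
    · rfl
    · rw [ih x hx]; exact h.2.1.symm

lemma hub_lemma {n : ℕ} {u v : Fin n × (Fin 5 ⊕ Fin 5)} (p : (Gk n).Walk u v)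
    (hap : IsAPath (Gk n) {x | x.2.isRight = true} p) (hev : Even p.length) :
    3 ≤ (p.support.toFinset.filter (fun x => x.2.isLeft)).card := by
  obtain ⟨hpath, hlen, hu, hv, hmem⟩ := hap
  have huv : u ≠ v := by
    rintro rfl
    rw [Walk.isPath_iff_eq_nil] at hpath
    subst hpath
    simp at hlen
  obtain ⟨iu, hiu⟩ := Sum.isRight_iff.mp hu
  obtain ⟨iv, hiv⟩ := Sum.isRight_iff.mp hv
  -- exclude length 2
  have hlen2 : p.length ≠ 2 := by
    intro h2
    have h1 : (Gk n).Adj u (p.getVert 1) := by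
      have := p.adj_getVert_succ (i := 0) (by omega)
      simpa using this
    have h2' : (Gk n).Adj (p.getVert 1) v := by
      have := p.adj_getVert_succ (i := 1) (by omega)
      rwa [show (1+1 : ℕ) = p.length by omega, p.getVert_length] at this
    have e1 := pendant_adj hiu h1
    have e2 := pendant_adj hiv h2'.symm
    have hi : iu = iv := by rw [e1] at e2; exact Sum.inl.injEq _ _ ▸ e2
    apply huv
    have hc : v.1 = u.1 := walk_copy p v p.end_mem_support
    exact Prod.ext hc.symm (by rw [hiu, hiv, hi])
  have hlen4 : 4 ≤ p.length := by
    obtain ⟨m, hm⟩ := hev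
    omega
  -- support counting
  have hnodup := hpath.support_nodup
  have hScard : p.support.toFinset.card = p.length + 1 := by
    rw [List.toFinset_card_of_nodup hnodup, p.length_support]
  have hRfilter : p.support.toFinset.filter (fun x => ¬ x.2.isLeft) = {u, v} := by
    ext x
    simp only [Finset.mem_filter, List.mem_toFinset, Finset.mem_insert, Finset.mem_singleton]
    constructor
    · rintro ⟨hxs, hxr⟩
      exact hmem x hxs (by simpa [Sum.not_isLeft] using hxr)
    · rintro (rfl | rfl)
      · exact ⟨p.start_mem_support, by simp only [Sum.not_isLeft]; exact hu⟩
      · exact ⟨p.end_mem_support, by simp only [Sum.not_isLeft]; exact hv⟩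
  have hsplit : (p.support.toFinset.filter (fun x => x.2.isLeft)).card
      + (p.support.toFinset.filter (fun x => ¬ x.2.isLeft)).card
      = p.support.toFinset.card :=
    Finset.card_filter_add_card_filter_not _
  have hRcard : (p.support.toFinset.filter (fun x => ¬ x.2.isLeft)).card = 2 := by
    rw [hRfilter]
    rw [Finset.card_insert_of_notMem (by simpa using huv), Finset.card_singleton]
  omega

lemma hub_subset {n : ℕ} {u v : Fin n × (Fin 5 ⊕ Fin 5)} (p : (Gk n).Walk u v) :
    p.support.toFinset.filter (fun x => x.2.isLeft) ⊆
      Finset.univ.image (fun m : Fin 5 => (u.1, Sum.inl m)) := by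
  intro x hx
  rw [Finset.mem_filter, List.mem_toFinset] at hx
  obtain ⟨hxs, hxl⟩ := hx
  obtain ⟨m, hm⟩ := Sum.isLeft_iff.mp hxl
  rw [Finset.mem_image]
  exact ⟨m, Finset.mem_univ m, by rw [← hm, ← walk_copy p x hxs]⟩

lemma no_two_disjoint {n : ℕ} {u v u' v' : Fin n × (Fin 5 ⊕ Fin 5)}
    (p : (Gk n).Walk u v) (q : (Gk n).Walk u' v')
    (hp : IsAPath (Gk n) {x | x.2.isRight = true} p)
    (hq : IsAPath (Gk n) {x | x.2.isRight = true} q)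
    (hep : Even p.length) (heq : Even q.length) (hcopy : u.1 = u'.1) :
    ∃ x, x ∈ p.support ∧ x ∈ q.support := by
  let Hp := p.support.toFinset.filter (fun x => x.2.isLeft)
  let Hq := q.support.toFinset.filter (fun x => x.2.isLeft)
  have hinj : Function.Injective (fun m : Fin 5 => ((u.1, Sum.inl m) : Fin n × (Fin 5 ⊕ Fin 5))) :=
    fun a b h => by simpa using h
  have h5 : (Finset.univ.image (fun m : Fin 5 => ((u.1, Sum.inl m) : Fin n × (Fin 5 ⊕ Fin 5)))).card = 5 := by
    rw [Finset.card_image_of_injective _ hinj]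
    simp
  have hsubp : Hp ⊆ Finset.univ.image (fun m : Fin 5 => (u.1, Sum.inl m)) := hub_subset p
  have hsubq : Hq ⊆ Finset.univ.image (fun m : Fin 5 => (u.1, Sum.inl m)) := by
    rw [hcopy]; exact hub_subset q
  have hun : (Hp ∪ Hq).card ≤ 5 :=
    le_trans (Finset.card_le_card (Finset.union_subset hsubp hsubq)) (le_of_eq h5)
  have h3p := hub_lemma p hp hep
  have h3q := hub_lemma q hq heq
  have hint := Finset.card_inter_add_card_union Hp Hq
  have h3p' : 3 ≤ Hp.card := h3p
  have h3q' : 3 ≤ Hq.card := h3q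
  have : 0 < (Hp ∩ Hq).card := by omega
  obtain ⟨x, hx⟩ := Finset.card_pos.mp this
  rw [Finset.mem_inter] at hx
  have hx1 := Finset.mem_filter.mp hx.1
  have hx2 := Finset.mem_filter.mp hx.2
  exact ⟨x, List.mem_toFinset.mp hx1.1, List.mem_toFinset.mp hx2.1⟩

lemma cover_per_copy {n : ℕ} (c : Fin n) (X : Finset (Fin n × (Fin 5 ⊕ Fin 5)))
    (hX : ∀ (u v : Fin n × (Fin 5 ⊕ Fin 5)) (p : (Gk n).Walk u v),
      IsAPath (Gk n) {x | x.2.isRight = true} p → Even p.length →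
      ∃ x ∈ X, x ∈ p.support) :
    3 ≤ (X.filter (fun x => x.1 = c)).card := by
  by_contra hlt
  push_neg at hlt
  set S := (X.filter (fun x => x.1 = c)).image (fun v => Sidx v.2) with hS
  have hScard : S.card ≤ 2 := le_trans Finset.card_image_le (by omega)
  have hcompl : 3 ≤ (Finset.univ \ S).card := by
    rw [Finset.card_sdiff_of_subset (Finset.subset_univ S)]
    simp only [Finset.card_univ, Fintype.card_fin]
    omega
  obtain ⟨T, hTsub, hT3⟩ := Finset.exists_subset_card_eq hcompl
  obtain ⟨a, b, d, hab, had, hbd, rfl⟩ := Finset.card_eq_three.mp hT3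
  -- build the walk (c, inr a) - (c, inl a) - (c, inl b) - (c, inl d) - (c, inr d)
  have adj1 : (Gk n).Adj (c, Sum.inr a) (c, Sum.inl a) :=
    ⟨by simp, rfl, Or.inr rfl⟩
  have adj2 : (Gk n).Adj (c, Sum.inl a) (c, Sum.inl b) :=
    ⟨by simp [hab], rfl, Or.inl ⟨rfl, rfl⟩⟩
  have adj3 : (Gk n).Adj (c, Sum.inl b) (c, Sum.inl d) :=
    ⟨by simp [hbd], rfl, Or.inl ⟨rfl, rfl⟩⟩
  have adj4 : (Gk n).Adj (c, Sum.inl d) (c, Sum.inr d) :=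
    ⟨by simp, rfl, Or.inr rfl⟩
  let p : (Gk n).Walk (c, Sum.inr a) (c, Sum.inr d) :=
    Walk.cons adj1 (Walk.cons adj2 (Walk.cons adj3 (Walk.cons adj4 Walk.nil)))
  have hsup : p.support = [(c, Sum.inr a), (c, Sum.inl a), (c, Sum.inl b),
      (c, Sum.inl d), (c, Sum.inr d)] := rfl
  have hlength : p.length = 4 := rfl
  have hpath : p.IsPath := by
    rw [Walk.isPath_def, hsup]
    simp [hab, had, hbd, Ne.symm had]
  have hAp : IsAPath (Gk n) {x | x.2.isRight = true} p := by
    refine ⟨hpath, by rw [hlength]; omega, rfl, rfl, ?_⟩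
    intro x hx hxA
    rw [hsup] at hx
    simp only [List.mem_cons, List.not_mem_nil, or_false] at hx
    rcases hx with rfl | rfl | rfl | rfl | rfl
    · exact Or.inl rfl
    · simp at hxA
    · simp at hxA
    · simp at hxA
    · exact Or.inr rfl
  obtain ⟨x, hxX, hxsup⟩ := hX _ _ p hAp (by rw [hlength]; exact ⟨2, rfl⟩)
  -- x is in the support, so x.1 = c and Sidx x.2 ∈ {a, b, d} ⊆ univ \ S
  have hxc : x.1 = c ∧ Sidx x.2 ∈ ({a, b, d} : Finset (Fin 5)) := by
    rw [hsup] at hxsup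
    simp only [List.mem_cons, List.not_mem_nil, or_false] at hxsup
    rcases hxsup with rfl | rfl | rfl | rfl | rfl <;>
      simp [Finset.mem_insert]
  have hxS : Sidx x.2 ∈ S := by
    rw [hS, Finset.mem_image]
    exact ⟨x, Finset.mem_filter.mpr ⟨hxX, hxc.1⟩, rfl⟩
  have := hTsub hxc.2
  rw [Finset.mem_sdiff] at this
  exact this.2 hxS

/-- Lower bound for even A-paths: there is a graph with no k disjoint even A-paths in
which every hitting set for even A-paths has at least 3(k-1) vertices. -/
theorem even_Apaths_lower_bound (k : ℕ) (hk : 0 < k) :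
    ∃ (V : Type) (_ : Fintype V) (G : SimpleGraph V) (A : Set V),
      (¬ ∃ f : Fin k → Σ u : V, Σ v : V, G.Walk u v,
        (∀ i, IsAPath G A (f i).2.2 ∧ Even (f i).2.2.length) ∧
        (∀ i j, i ≠ j → ∀ x, x ∈ (f i).2.2.support → x ∉ (f j).2.2.support)) ∧
      (∀ X : Finset V,
        (∀ (u v : V) (p : G.Walk u v), IsAPath G A p → Even p.length →
          ∃ x ∈ X, x ∈ p.support) →
        3 * (k - 1) ≤ X.card) := by
  refine ⟨Fin (k - 1) × (Fin 5 ⊕ Fin 5), inferInstance, Gk (k - 1),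
    {x | x.2.isRight = true}, ?_, ?_⟩
  · rintro ⟨f, hAP, hdisj⟩
    obtain ⟨i, j, hij, hc⟩ := Fintype.exists_ne_map_eq_of_card_lt
      (fun i : Fin k => ((f i).1).1) (by simp; omega)
    obtain ⟨x, hxi, hxj⟩ := no_two_disjoint (f i).2.2 (f j).2.2
      (hAP i).1 (hAP j).1 (hAP i).2 (hAP j).2 hc
    exact hdisj i j hij x hxi hxj
  · intro X hX
    calc 3 * (k - 1) = ∑ _c : Fin (k - 1), 3 := by
          simp [Finset.sum_const, Finset.card_univ, mul_comm]
      _ ≤ ∑ c : Fin (k - 1), (X.filter (fun x => x.1 = c)).card :=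
          Finset.sum_le_sum (fun c _ => cover_per_copy c X hX)
      _ = X.card :=
          (Finset.card_eq_sum_card_fiberwise (fun x _ => Finset.mem_univ x.1)).symm
end

section
/- For every finite tree T and every vertex set A ⊆ V(T), the tree T contains ⌊|A|/2⌋ pairwise edge-disjoint A-paths. -/
open SimpleGraph

namespace APathAux

variable {V : Type*} {G : SimpleGraph V}

lemma sum_lt_of_pair {m : ℕ} (t t' : Fin m → ℕ) (i j : Fin m) (hij : i ≠ j)
    (h1 : ∀ k, k ≠ i → k ≠ j → t' k = t k) (h2 : t' i + t' j < t i + t j) :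
    ∑ k, t' k < ∑ k, t k := by
  classical
  have hj : j ∈ (Finset.univ : Finset (Fin m)).erase i :=
    Finset.mem_erase.2 ⟨Ne.symm hij, Finset.mem_univ j⟩
  have key : ∀ u : Fin m → ℕ,
      ∑ k, u k = u i + (u j + ∑ k ∈ ((Finset.univ : Finset (Fin m)).erase i).erase j, u k) := by
    intro u
    rw [← Finset.add_sum_erase _ u (Finset.mem_univ i), ← Finset.add_sum_erase _ u hj]
  have htail : ∑ k ∈ ((Finset.univ : Finset (Fin m)).erase i).erase j, t' k
      = ∑ k ∈ ((Finset.univ : Finset (Fin m)).erase i).erase j, t k := by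
    refine Finset.sum_congr rfl fun k hk => ?_
    rcases Finset.mem_erase.1 hk with ⟨hkj, hk'⟩
    rcases Finset.mem_erase.1 hk' with ⟨hki, _⟩
    exact h1 k hki hkj
  rw [key t, key t', htail]
  omega

/-- Truncate a path ending in `A` at the first vertex of `A` after the start. -/
lemma trunc (A : Set V) : ∀ {a b : V} (p : G.Walk a b), b ∈ A → p.IsPath → 1 ≤ p.length →
    ∃ (w : V) (q : G.Walk a w), w ∈ A ∧ q.IsPath ∧ 1 ≤ q.length ∧
      (∀ e ∈ q.edges, e ∈ p.edges) ∧ (∀ x ∈ q.support, x ∈ p.support) ∧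
      (∀ x ∈ q.support, x ∈ A → x = a ∨ x = w) := by
  classical
  intro a b p
  induction p with
  | nil => intro _ _ hlen; simp at hlen
  | @cons a c b h r ih =>
    intro hb hp _
    by_cases hc : c ∈ A
    · refine ⟨c, Walk.cons h Walk.nil, hc, ?_, by simp, ?_, ?_, ?_⟩
      · rw [Walk.cons_isPath_iff]
        exact ⟨Walk.IsPath.nil, by simp [h.ne]⟩
      · intro e he; simp at he; simp [he]
      · intro x hx; simp at hx
        rcases hx with hx | hx
        · simp [hx]
        · subst hx; simp [Walk.start_mem_support]
      · intro x hx _; simpa using hx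
    · have hcb : c ≠ b := fun hcb => hc (hcb ▸ hb)
      have hr1 : 1 ≤ r.length := by
        rcases Nat.eq_zero_or_pos r.length with h0 | h0
        · exact absurd (Walk.eq_of_length_eq_zero h0) hcb
        · exact h0
      obtain ⟨w, q, hw, hqp, hql, hqe, hqs, hqA⟩ := ih hb hp.of_cons hr1
      have hanotin : a ∉ q.support := fun ha =>
        ((Walk.cons_isPath_iff _ _).1 hp).2 (hqs a ha)
      refine ⟨w, Walk.cons h q, hw, ?_, by simp, ?_, ?_, ?_⟩
      · rw [Walk.cons_isPath_iff]; exact ⟨hqp, hanotin⟩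
      · intro e he
        rw [Walk.edges_cons] at he ⊢
        rcases List.mem_cons.1 he with he | he
        · exact List.mem_cons.2 (Or.inl he)
        · exact List.mem_cons.2 (Or.inr (hqe e he))
      · intro x hx
        rw [Walk.support_cons] at hx ⊢
        rcases List.mem_cons.1 hx with hx | hx
        · exact List.mem_cons.2 (Or.inl hx)
        · exact List.mem_cons.2 (Or.inr (hqs x hx))
      · intro x hx hxA
        rw [Walk.support_cons] at hx
        rcases List.mem_cons.1 hx with hx | hx
        · exact Or.inl hx
        · rcases hqA x hx hxA with hx' | hx'
          · exact absurd (hx' ▸ hxA) hc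
          · exact Or.inr hx'

/-- On a shortest walk, any edge splits the distance. -/
lemma shortest_split (hG : G.Connected) :
    ∀ {a b : V} (p : G.Walk a b), p.length = G.dist a b → ∀ e ∈ p.edges,
      ∃ x y, e = s(x, y) ∧ G.dist a x + (1 + G.dist y b) = G.dist a b := by
  intro a b p
  induction p with
  | nil => intro _ e he; simp at he
  | @cons a c b h r ih =>
    intro hlen e he
    have hac : G.dist a c ≤ 1 := by
      have := SimpleGraph.dist_le (Walk.cons h (Walk.nil : G.Walk c c))
      simpa using this
    have htri : G.dist a b ≤ G.dist a c + G.dist c b := hG.dist_triangle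
    have h2 : G.dist c b ≤ r.length := SimpleGraph.dist_le r
    have hlen' : r.length + 1 = G.dist a b := by simpa using hlen
    have hr : r.length = G.dist c b := by omega
    have hab : G.dist a b = 1 + G.dist c b := by omega
    rw [Walk.edges_cons] at he
    rcases List.mem_cons.1 he with he | he
    · refine ⟨a, c, he, ?_⟩
      rw [SimpleGraph.dist_self]
      omega
    · obtain ⟨x, y, hxy, hsum⟩ := ih hr e he
      have hadj : G.Adj x y := r.adj_of_mem_edges (hxy ▸ he)
      have hxy1 : G.dist x y ≤ 1 := by
        have := SimpleGraph.dist_le (Walk.cons hadj (Walk.nil : G.Walk y y))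
        simpa using this
      refine ⟨x, y, hxy, ?_⟩
      have t1 : G.dist a x ≤ G.dist a c + G.dist c x := hG.dist_triangle
      have t2 : G.dist a b ≤ G.dist a x + G.dist x b := hG.dist_triangle
      have t3 : G.dist x b ≤ G.dist x y + G.dist y b := hG.dist_triangle
      omega

end APathAux

/-- Every finite tree T with A ⊆ V(T) contains ⌊|A|/2⌋ pairwise edge-disjoint
A-paths. -/
theorem tree_edge_disjoint_Apaths {V : Type*} [Fintype V] (G : SimpleGraph V)
    (hT : G.IsTree) (A : Finset V) :
    ∃ f : Fin (A.card / 2) → Σ u : V, Σ v : V, G.Walk u v,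
      (∀ i, IsAPath G (↑A) (f i).2.2) ∧
      (∀ i j, i ≠ j → ∀ e, e ∈ (f i).2.2.edges → e ∉ (f j).2.2.edges) := by
  classical
  obtain ⟨hconn, -⟩ := hT
  set m := A.card / 2 with hm
  have h2m : 2 * m ≤ A.card := by
    have := Nat.div_mul_le_self A.card 2
    omega
  let pa : Fin m → Fin (2 * m) := fun i => ⟨2 * i.val, by have := i.isLt; omega⟩
  let pb : Fin m → Fin (2 * m) := fun i => ⟨2 * i.val + 1, by have := i.isLt; omega⟩
  have pa_ne_pb : ∀ k l, pa k ≠ pb l := by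
    intro k l h
    have := Fin.val_eq_val (pa k) (pb l) |>.2 h
    simp only [pa, pb] at this
    omega
  have pa_inj : ∀ k l, pa k = pa l → k = l := by
    intro k l h
    have := Fin.val_eq_val (pa k) (pa l) |>.2 h
    simp only [pa] at this
    exact Fin.ext (by omega)
  have pb_inj : ∀ k l, pb k = pb l → k = l := by
    intro k l h
    have := Fin.val_eq_val (pb k) (pb l) |>.2 h
    simp only [pb] at this
    exact Fin.ext (by omega)
  let Valid : (Fin (2 * m) → V) → Prop := fun g => Function.Injective g ∧ ∀ i, g i ∈ A
  let F : (Fin (2 * m) → V) → ℕ := fun g => ∑ i : Fin m, G.dist (g (pa i)) (g (pb i))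
  have hex : ∃ g, Valid g := by
    have e : ↥A ≃ Fin A.card := (Fintype.equivFin ↥A).trans (finCongr (Fintype.card_coe A))
    refine ⟨fun i => (e.symm (Fin.castLE h2m i) : V), ?_, fun i => (e.symm _).2⟩
    intro i j hij
    exact Fin.castLE_injective h2m (e.symm.injective (Subtype.ext hij))
  obtain ⟨g0, hg0⟩ := hex
  obtain ⟨N, hN, hNmin⟩ := Nat.lt_wfRel.wf.has_min {n | ∃ g, Valid g ∧ F g = n}
    ⟨F g0, g0, hg0, rfl⟩
  obtain ⟨g, hgV, hgF⟩ := hN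
  have hne : ∀ i : Fin m, g (pa i) ≠ g (pb i) := by
    intro i h
    exact pa_ne_pb i i (hgV.1 h)
  choose p hp using fun i : Fin m => (hconn (g (pa i)) (g (pb i))).exists_walk_length_eq_dist
  let q : ∀ i : Fin m, G.Walk (g (pa i)) (g (pb i)) := fun i => (p i).bypass
  have hq_len : ∀ i, (q i).length = G.dist (g (pa i)) (g (pb i)) := fun i =>
    le_antisymm ((Walk.length_bypass_le _).trans_eq (hp i)) (SimpleGraph.dist_le _)
  have hq_path : ∀ i, (q i).IsPath := fun i => Walk.bypass_isPath _
  -- edge-disjointness of the shortest paths, by the exchange argument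
  have hdisj : ∀ i j, i ≠ j → ∀ e, e ∈ (q i).edges → e ∉ (q j).edges := by
    intro i j hij e hei hej
    obtain ⟨x, y, hxy, hsum1⟩ := APathAux.shortest_split hconn (q i) (hq_len i) e hei
    obtain ⟨x', y', hxy', hsum2⟩ := APathAux.shortest_split hconn (q j) (hq_len j) e hej
    have hcase : (x' = x ∧ y' = y) ∨ (x' = y ∧ y' = x) := by
      have : s(x, y) = s(x', y') := hxy ▸ hxy'
      rw [Sym2.eq_iff] at this
      tauto
    set t : Fin m → ℕ := fun k => G.dist (g (pa k)) (g (pb k)) with ht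
    have habs : ∀ σ : Equiv.Perm (Fin (2 * m)),
        (∀ k, k ≠ i → k ≠ j → G.dist ((g ∘ σ) (pa k)) ((g ∘ σ) (pb k)) = t k) →
        (G.dist ((g ∘ σ) (pa i)) ((g ∘ σ) (pb i))
          + G.dist ((g ∘ σ) (pa j)) ((g ∘ σ) (pb j)) < t i + t j) → False := by
      intro σ hfix hlt
      have hval : Valid (g ∘ σ) := ⟨hgV.1.comp σ.injective, fun k => hgV.2 _⟩
      have hFlt : F (g ∘ σ) < F g :=
        APathAux.sum_lt_of_pair t (fun k => G.dist ((g ∘ σ) (pa k)) ((g ∘ σ) (pb k)))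
          i j hij hfix hlt
      exact hNmin (F (g ∘ σ)) ⟨g ∘ σ, hval, rfl⟩ (show F (g ∘ σ) < N from hgF ▸ hFlt)
    rcases hcase with ⟨hx', hy'⟩ | ⟨hx', hy'⟩
    · -- same orientation: swap (pb i) with (pa j)
      rw [hx', hy'] at hsum2
      refine habs (Equiv.swap (pb i) (pa j)) ?_ ?_
      · intro k hki hkj
        have e1 : Equiv.swap (pb i) (pa j) (pa k) = pa k :=
          Equiv.swap_apply_of_ne_of_ne (fun h => pa_ne_pb k i h)
            (fun h => hkj (pa_inj k j h))
        have e2 : Equiv.swap (pb i) (pa j) (pb k) = pb k :=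
          Equiv.swap_apply_of_ne_of_ne (fun h => hki (pb_inj k i h))
            (fun h => pa_ne_pb j k h.symm)
        simp [Function.comp, e1, e2, ht]
      · have e1 : Equiv.swap (pb i) (pa j) (pa i) = pa i :=
          Equiv.swap_apply_of_ne_of_ne (fun h => pa_ne_pb i i h)
            (fun h => hij (pa_inj i j h))
        have e2 : Equiv.swap (pb i) (pa j) (pb i) = pa j := Equiv.swap_apply_left _ _
        have e3 : Equiv.swap (pb i) (pa j) (pa j) = pb i := Equiv.swap_apply_right _ _
        have e4 : Equiv.swap (pb i) (pa j) (pb j) = pb j :=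
          Equiv.swap_apply_of_ne_of_ne (fun h => hij (pb_inj j i h).symm)
            (fun h => pa_ne_pb j j h.symm)
        simp only [Function.comp, e1, e2, e3, e4, ht]
        have t1 : G.dist (g (pa i)) (g (pa j)) ≤ G.dist (g (pa i)) x + G.dist x (g (pa j)) :=
          hconn.dist_triangle
        have t2 : G.dist (g (pb i)) (g (pb j)) ≤ G.dist (g (pb i)) y + G.dist y (g (pb j)) :=
          hconn.dist_triangle
        have c1 : G.dist x (g (pa j)) = G.dist (g (pa j)) x := SimpleGraph.dist_comm ..
        have c2 : G.dist (g (pb i)) y = G.dist y (g (pb i)) := SimpleGraph.dist_comm ..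
        omega
    · -- opposite orientation: swap (pb i) with (pb j)
      rw [hx', hy'] at hsum2
      refine habs (Equiv.swap (pb i) (pb j)) ?_ ?_
      · intro k hki hkj
        have e1 : Equiv.swap (pb i) (pb j) (pa k) = pa k :=
          Equiv.swap_apply_of_ne_of_ne (fun h => pa_ne_pb k i h)
            (fun h => pa_ne_pb k j h)
        have e2 : Equiv.swap (pb i) (pb j) (pb k) = pb k :=
          Equiv.swap_apply_of_ne_of_ne (fun h => hki (pb_inj k i h))
            (fun h => hkj (pb_inj k j h))
        simp [Function.comp, e1, e2, ht]
      · have e1 : Equiv.swap (pb i) (pb j) (pa i) = pa i :=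
          Equiv.swap_apply_of_ne_of_ne (fun h => pa_ne_pb i i h)
            (fun h => pa_ne_pb i j h)
        have e2 : Equiv.swap (pb i) (pb j) (pb i) = pb j := Equiv.swap_apply_left _ _
        have e3 : Equiv.swap (pb i) (pb j) (pa j) = pa j :=
          Equiv.swap_apply_of_ne_of_ne (fun h => pa_ne_pb j i h)
            (fun h => pa_ne_pb j j h)
        have e4 : Equiv.swap (pb i) (pb j) (pb j) = pb i := Equiv.swap_apply_right _ _
        simp only [Function.comp, e1, e2, e3, e4, ht]
        have t1 : G.dist (g (pa i)) (g (pb j)) ≤ G.dist (g (pa i)) x + G.dist x (g (pb j)) :=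
          hconn.dist_triangle
        have t2 : G.dist (g (pa j)) (g (pb i)) ≤ G.dist (g (pa j)) y + G.dist y (g (pb i)) :=
          hconn.dist_triangle
        have c2 : G.dist y (g (pb i)) = G.dist (g (pb i)) y := SimpleGraph.dist_comm ..
        omega
  -- truncate each shortest path to an A-path
  have htr : ∀ i : Fin m, ∃ (w : V) (r : G.Walk (g (pa i)) w), w ∈ (↑A : Set V) ∧
      r.IsPath ∧ 1 ≤ r.length ∧ (∀ e ∈ r.edges, e ∈ (q i).edges) ∧
      (∀ x ∈ r.support, x ∈ (q i).support) ∧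
      (∀ x ∈ r.support, x ∈ (↑A : Set V) → x = g (pa i) ∨ x = w) := by
    intro i
    have hlen1 : 1 ≤ (q i).length := by
      rcases Nat.eq_zero_or_pos (q i).length with h0 | h0
      · exact absurd (Walk.eq_of_length_eq_zero h0) (hne i)
      · exact h0
    exact APathAux.trunc (↑A : Set V) (q i) (by simpa using hgV.2 (pb i)) (hq_path i) hlen1
  choose w r hw hrp hrl hre hrs hrA using htr
  refine ⟨fun i => ⟨g (pa i), w i, r i⟩, ?_, ?_⟩
  · intro i
    exact ⟨hrp i, hrl i, by simpa using hgV.2 (pa i), hw i, hrA i⟩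
  · intro i j hij e hei hej
    exact hdisj i j hij e (hre i e hei) (hre j e hej)
end
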